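/- arXiv:2103.11387 — 7 statements merged into one kernel-verified Lean document; each statement's English description precedes it below -/
import Mathlib

section
/- Let D be a double Boolean algebra. For all x, y ∈ D: (i) x⊓y ⊑ x∨y ⊑ x⊔y, and (ii) x⊓y ⊑ x∧y ⊑ x⊔y. -/
universe u v

/-- A double Boolean algebra (dBa). -/
structure DBA (D : Type u) where
  sup : D → D → D
  inf : D → D → D
  neg : D → D
  dneg : D → D
  top : D
  bot : D
  ax1a : ∀ x y, inf (inf x x) y = inf x y
  ax2a : ∀ x y, inf x y = inf y x
  ax3a : ∀ x y z, inf x (inf y z) = inf (inf x y) z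
  ax4a : ∀ x, neg (inf x x) = neg x
  ax5a : ∀ x y, inf x (sup x y) = inf x x
  ax6a : ∀ x y z, inf x (neg (inf (neg y) (neg z))) =
      neg (inf (neg (inf x y)) (neg (inf x z)))
  ax7a : ∀ x y, inf x (neg (inf (neg x) (neg y))) = inf x x
  ax8a : ∀ x y, neg (neg (inf x y)) = inf x y
  ax9a : ∀ x, inf x (neg x) = bot
  ax10a : neg bot = inf top top
  ax11a : neg top = bot
  ax1b : ∀ x y, sup (sup x x) y = sup x y
  ax2b : ∀ x y, sup x y = sup y x
  ax3b : ∀ x y z, sup x (sup y z) = sup (sup x y) z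
  ax4b : ∀ x, dneg (sup x x) = dneg x
  ax5b : ∀ x y, sup x (inf x y) = sup x x
  ax6b : ∀ x y z, sup x (dneg (sup (dneg y) (dneg z))) =
      dneg (sup (dneg (sup x y)) (dneg (sup x z)))
  ax7b : ∀ x y, sup x (dneg (sup (dneg x) (dneg y))) = sup x x
  ax8b : ∀ x y, dneg (dneg (sup x y)) = sup x y
  ax9b : ∀ x, sup x (dneg x) = top
  ax10b : dneg top = sup bot bot
  ax11b : dneg bot = top
  ax12 : ∀ x, sup (inf x x) (inf x x) = inf (sup x x) (sup x x)

namespace DBA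

variable {D : Type u} {E : Type v}

/-- x ∨ y := ¬(¬x ⊓ ¬y) -/
def vee (A : DBA D) (x y : D) : D := A.neg (A.inf (A.neg x) (A.neg y))

/-- x ∧ y := ⌟(⌟x ⊔ ⌟y) -/
def wedge (A : DBA D) (x y : D) : D := A.dneg (A.sup (A.dneg x) (A.dneg y))

/-- The quasi-order ⊑. -/
def le (A : DBA D) (x y : D) : Prop := A.inf x y = A.inf x x ∧ A.sup x y = A.sup y y

def IsFilter (A : DBA D) (F : Set D) : Prop :=
  (∀ x ∈ F, ∀ y ∈ F, A.inf x y ∈ F) ∧ ∀ x ∈ F, ∀ z, A.le x z → z ∈ F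

def IsIdeal (A : DBA D) (I : Set D) : Prop :=
  (∀ x ∈ I, ∀ y ∈ I, A.sup x y ∈ I) ∧ ∀ x ∈ I, ∀ z, A.le z x → z ∈ I

def IsPrimaryFilter (A : DBA D) (F : Set D) : Prop :=
  A.IsFilter F ∧ F ≠ Set.univ ∧ ∀ x, x ∈ F ∨ A.neg x ∈ F

def IsPrimaryIdeal (A : DBA D) (I : Set D) : Prop :=
  A.IsIdeal I ∧ I ≠ Set.univ ∧ ∀ x, x ∈ I ∨ A.dneg x ∈ I

def Pure (A : DBA D) : Prop := ∀ x, A.inf x x = x ∨ A.sup x x = x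

def Contextual (A : DBA D) : Prop := ∀ x y, A.le x y → A.le y x → x = y

def FullyContextual (A : DBA D) : Prop :=
  A.Contextual ∧
    ∀ y x, A.inf y y = y → A.sup x x = x → A.sup y y = A.inf x x →
      ∃! z, A.inf z z = y ∧ A.sup z z = x

/-- D_p = D_⊓ ∪ D_⊔ -/
def Dp (A : DBA D) : Set D := {x | A.inf x x = x} ∪ {x | A.sup x x = x}

def IsHom (A : DBA D) (B : DBA E) (h : D → E) : Prop :=
  (∀ x y, h (A.inf x y) = B.inf (h x) (h y)) ∧
  (∀ x y, h (A.sup x y) = B.sup (h x) (h y)) ∧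
  (∀ x, h (A.neg x) = B.neg (h x)) ∧
  (∀ x, h (A.dneg x) = B.dneg (h x)) ∧
  h A.top = B.top ∧ h A.bot = B.bot

def IsHomOn (A : DBA D) (B : DBA E) (S : Set D) (h : D → E) : Prop :=
  (∀ x ∈ S, ∀ y ∈ S, h (A.inf x y) = B.inf (h x) (h y)) ∧
  (∀ x ∈ S, ∀ y ∈ S, h (A.sup x y) = B.sup (h x) (h y)) ∧
  (∀ x ∈ S, h (A.neg x) = B.neg (h x)) ∧
  (∀ x ∈ S, h (A.dneg x) = B.dneg (h x)) ∧
  h A.top = B.top ∧ h A.bot = B.bot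

end DBA

section FCA

variable {G : Type u} {M : Type v}

/-- B^◇ -/
def odia (R : G → M → Prop) (B : Set M) : Set G := {g | ∃ m ∈ B, R g m}
/-- B^□ -/
def obox (R : G → M → Prop) (B : Set M) : Set G := {g | ∀ m, R g m → m ∈ B}
/-- A^◆ -/
def obdia (R : G → M → Prop) (A : Set G) : Set M := {m | ∃ g ∈ A, R g m}
/-- A^■ -/
def obbox (R : G → M → Prop) (A : Set G) : Set M := {m | ∀ g, R g m → g ∈ A}

def pinf (R : G → M → Prop) (p q : Set G × Set M) : Set G × Set M :=
  (p.1 ∪ q.1, obbox R (p.1 ∪ q.1))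
def psup (R : G → M → Prop) (p q : Set G × Set M) : Set G × Set M :=
  (odia R (p.2 ∩ q.2), p.2 ∩ q.2)
def pneg (R : G → M → Prop) (p : Set G × Set M) : Set G × Set M :=
  (p.1ᶜ, obbox R p.1ᶜ)
def pdneg (R : G → M → Prop) (p : Set G × Set M) : Set G × Set M :=
  (odia R p.2ᶜ, p.2ᶜ)
def ptop : Set G × Set M := (∅, ∅)
def pbot : Set G × Set M := (Set.univ, Set.univ)
/-- quasi-order on pairs: (A,B) ⊑ (C,D) iff C ⊆ A and D ⊆ B -/
def ple (p q : Set G × Set M) : Prop := q.1 ⊆ p.1 ∧ q.2 ⊆ p.2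

/-- object oriented protoconcept -/
def IsProto (R : G → M → Prop) (p : Set G × Set M) : Prop :=
  odia R (obbox R p.1) = odia R p.2
/-- object oriented semiconcept -/
def IsSemi (R : G → M → Prop) (p : Set G × Set M) : Prop :=
  obbox R p.1 = p.2 ∨ odia R p.2 = p.1

/-- continuity of the relation R -/
def ContRel [TopologicalSpace G] [TopologicalSpace M] (R : G → M → Prop) : Prop :=
  ∀ O : Set M, IsOpen O → IsOpen (odia R O) ∧ IsOpen (obox R O)
/-- continuity of the converse relation R⁻¹ -/
def ContRelInv [TopologicalSpace G] [TopologicalSpace M] (R : G → M → Prop) : Prop :=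
  ∀ O : Set G, IsOpen O → IsOpen (obdia R O) ∧ IsOpen (obbox R O)

def IsClopenProto [TopologicalSpace G] [TopologicalSpace M] (R : G → M → Prop)
    (p : Set G × Set M) : Prop :=
  IsProto R p ∧ IsClopen p.1 ∧ IsClopen p.2

def IsClopenSemi [TopologicalSpace G] [TopologicalSpace M] (R : G → M → Prop)
    (p : Set G × Set M) : Prop :=
  IsSemi R p ∧ IsClopen p.1 ∧ IsClopen p.2

def pmap {G' : Type*} {M' : Type*} (α : G → G') (β : M → M') (p : Set G' × Set M') :
    Set G × Set M := (α ⁻¹' p.1, β ⁻¹' p.2)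

end FCA

section StoneDBA

variable {D : Type u}

/-- the set of primary filters of a dBa, as a type -/
def PrimF (A : DBA D) : Type u := {F : Set D // A.IsPrimaryFilter F}
/-- the set of primary ideals of a dBa, as a type -/
def PrimI (A : DBA D) : Type u := {I : Set D // A.IsPrimaryIdeal I}
/-- F ∇ I iff F ∩ I = ∅ -/
def nabla (A : DBA D) : PrimF A → PrimI A → Prop := fun F I => F.val ∩ I.val = ∅
/-- F_x -/
def Fset (A : DBA D) (x : D) : Set (PrimF A) := {F | x ∈ F.val}
/-- I_x -/
def Iset (A : DBA D) (x : D) : Set (PrimI A) := {I | x ∈ I.val}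

/-- the topology T on primary filters, with the F_x as a subbase of closed sets -/
def filtTop (A : DBA D) : TopologicalSpace (PrimF A) :=
  TopologicalSpace.generateFrom {U | ∃ x : D, U = (Fset A x)ᶜ}
/-- the topology J on primary ideals, with the I_x as a subbase of closed sets -/
def idlTop (A : DBA D) : TopologicalSpace (PrimI A) :=
  TopologicalSpace.generateFrom {U | ∃ x : D, U = (Iset A x)ᶜ}

/-- the map h(x) := (F_{¬x}, I_x) -/
def protoEmb (A : DBA D) (x : D) : Set (PrimF A) × Set (PrimI A) :=
  (Fset A (A.neg x), Iset A x)

end StoneDBA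

section SemiPrim

variable {G : Type u} {M : Type v} [TopologicalSpace G] [TopologicalSpace M]

/-- a primary filter of the dBa of clopen object oriented semiconcepts -/
def IsSemiPrimFilter (R : G → M → Prop) (F : Set (Set G × Set M)) : Prop :=
  (∀ p ∈ F, IsClopenSemi R p) ∧
  (∀ p ∈ F, ∀ q ∈ F, pinf R p q ∈ F) ∧
  (∀ p ∈ F, ∀ z, IsClopenSemi R z → ple p z → z ∈ F) ∧
  F ≠ {p | IsClopenSemi R p} ∧
  (∀ p, IsClopenSemi R p → (p ∈ F ∨ pneg R p ∈ F))

/-- a primary ideal of the dBa of clopen object oriented semiconcepts -/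
def IsSemiPrimIdeal (R : G → M → Prop) (I : Set (Set G × Set M)) : Prop :=
  (∀ p ∈ I, IsClopenSemi R p) ∧
  (∀ p ∈ I, ∀ q ∈ I, psup R p q ∈ I) ∧
  (∀ p ∈ I, ∀ z, IsClopenSemi R z → ple z p → z ∈ I) ∧
  I ≠ {p | IsClopenSemi R p} ∧
  (∀ p, IsClopenSemi R p → (p ∈ I ∨ pdneg R p ∈ I))

def SemiPF (R : G → M → Prop) := {F : Set (Set G × Set M) // IsSemiPrimFilter R F}
def SemiPI (R : G → M → Prop) := {I : Set (Set G × Set M) // IsSemiPrimIdeal R I}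

def semiPFTop (R : G → M → Prop) : TopologicalSpace (SemiPF R) :=
  TopologicalSpace.generateFrom
    {U | ∃ p, IsClopenSemi R p ∧ U = {F : SemiPF R | p ∈ F.val}ᶜ}
def semiPITop (R : G → M → Prop) : TopologicalSpace (SemiPI R) :=
  TopologicalSpace.generateFrom
    {U | ∃ p, IsClopenSemi R p ∧ U = {I : SemiPI R | p ∈ I.val}ᶜ}

end SemiPrim

section Stmt0Aux

variable {D : Type u}

lemma dba_inf_absorb_left (A : DBA D) (x y : D) :
    A.inf (A.inf x y) x = A.inf x y := by
  rw [A.ax2a, A.ax3a, A.ax1a]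

lemma dba_inf_absorb_right (A : DBA D) (x y : D) :
    A.inf (A.inf x y) y = A.inf x y := by
  rw [A.ax2a x y]; exact dba_inf_absorb_left A y x

lemma dba_inf_self (A : DBA D) (x y : D) :
    A.inf (A.inf x y) (A.inf x y) = A.inf x y := by
  calc A.inf (A.inf x y) (A.inf x y) = A.inf (A.inf (A.inf x y) x) y := A.ax3a _ x y
    _ = A.inf (A.inf x y) y := by rw [dba_inf_absorb_left]
    _ = A.inf x y := dba_inf_absorb_right A x y

lemma dba_sup_absorb_left (A : DBA D) (x y : D) :
    A.sup (A.sup x y) x = A.sup x y := by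
  rw [A.ax2b, A.ax3b, A.ax1b]

lemma dba_sup_absorb_right (A : DBA D) (x y : D) :
    A.sup (A.sup x y) y = A.sup x y := by
  rw [A.ax2b x y]; exact dba_sup_absorb_left A y x

lemma dba_sup_self (A : DBA D) (x y : D) :
    A.sup (A.sup x y) (A.sup x y) = A.sup x y := by
  calc A.sup (A.sup x y) (A.sup x y) = A.sup (A.sup (A.sup x y) x) y := A.ax3b _ x y
    _ = A.sup (A.sup x y) y := by rw [dba_sup_absorb_left]
    _ = A.sup x y := dba_sup_absorb_right A x y

/-- If b ⊓ a = a then a ⊑ b. -/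
lemma dba_le_of_inf (A : DBA D) {a b : D} (h : A.inf b a = a) : A.le a b := by
  have haa : A.inf a a = a := by
    conv_lhs => rw [← h]
    exact (dba_inf_self A b a).trans h
  constructor
  · rw [A.ax2a, h, haa]
  · rw [A.ax2b]
    conv_lhs => rw [← h]
    exact A.ax5b b a

/-- If a ⊔ b = b then a ⊑ b. -/
lemma dba_le_of_sup (A : DBA D) {a b : D} (h : A.sup a b = b) : A.le a b := by
  have hbb : A.sup b b = b := by
    conv_lhs => rw [← h]
    exact (dba_sup_self A a b).trans h
  constructor
  · conv_lhs => rw [← h]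
    exact A.ax5a a b
  · rw [h, hbb]

end Stmt0Aux

/-- For all x, y in a dBa D:
(i) x⊓y ⊑ x∨y ⊑ x⊔y, and (ii) x⊓y ⊑ x∧y ⊑ x⊔y. -/
theorem stmt0 {D : Type u} (A : DBA D) (x y : D) :
    (A.le (A.inf x y) (A.vee x y) ∧ A.le (A.vee x y) (A.sup x y)) ∧
    (A.le (A.inf x y) (A.wedge x y) ∧ A.le (A.wedge x y) (A.sup x y)) := by
  have E1 : A.inf (A.inf x y) (A.vee x y) = A.inf x y := by
    unfold DBA.vee
    rw [A.ax6a (A.inf x y) x y, dba_inf_absorb_left, dba_inf_absorb_right,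
      A.ax4a, A.ax8a]
  have E2 : A.inf (A.sup x y) (A.vee x y) = A.vee x y := by
    unfold DBA.vee
    rw [A.ax6a (A.sup x y) x y, A.ax2a (A.sup x y) x, A.ax5a,
      A.ax2a (A.sup x y) y, A.ax2b x y, A.ax5a, A.ax4a, A.ax4a]
  have E3 : A.sup (A.inf x y) (A.wedge x y) = A.wedge x y := by
    unfold DBA.wedge
    rw [A.ax6b (A.inf x y) x y, A.ax2b (A.inf x y) x, A.ax5b,
      A.ax2b (A.inf x y) y, A.ax2a x y, A.ax5b, A.ax4b, A.ax4b]
  have E4 : A.sup (A.sup x y) (A.wedge x y) = A.sup x y := by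
    unfold DBA.wedge
    rw [A.ax6b (A.sup x y) x y, dba_sup_absorb_left, dba_sup_absorb_right,
      A.ax4b, A.ax8b]
  refine ⟨⟨?_, ?_⟩, ?_, ?_⟩
  · exact dba_le_of_inf A ((A.ax2a _ _).trans E1)
  · exact dba_le_of_inf A E2
  · exact dba_le_of_sup A E3
  · exact dba_le_of_sup A ((A.ax2b _ _).trans E4)
end

section
/- Any Boolean algebra (D,⊓,⊔,¬,⊤,⊥) becomes a double Boolean algebra (D,⊔,⊓,¬,⌟,⊤,⊥) that is both fully contextual and pure when one defines ⌟a := ¬a for all a ∈ D. Conversely, if a double Boolean algebra (D,⊔,⊓,¬,⌟,⊤,⊥) satisfies ¬a = ⌟a and ¬¬a = a for all a ∈ D, then (D,⊓,⊔,¬,⊤,⊥) is a Boolean algebra whose lattice order is the relation ⊑. -/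
universe u v

section Part2Aux

variable {D : Type u} (A : DBA D)

lemma aux_inf_idem (h2 : ∀ a, A.neg (A.neg a) = a) (x : D) : A.inf x x = x := by
  calc A.inf x x = A.neg (A.neg (A.inf x x)) := (h2 _).symm
    _ = A.neg (A.neg x) := by rw [A.ax4a]
    _ = x := h2 x

lemma aux_sup_idem (h1 : ∀ a, A.neg a = A.dneg a) (h2 : ∀ a, A.neg (A.neg a) = a)
    (x : D) : A.sup x x = x := by
  have h4 : A.neg (A.sup x x) = A.neg x := by rw [h1, A.ax4b, ← h1]
  calc A.sup x x = A.neg (A.neg (A.sup x x)) := (h2 _).symm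
    _ = A.neg (A.neg x) := by rw [h4]
    _ = x := h2 x

lemma aux_absorb1 (h2 : ∀ a, A.neg (A.neg a) = a) (x y : D) :
    A.inf x (A.sup x y) = x := by rw [A.ax5a, aux_inf_idem A h2]

lemma aux_absorb2 (h1 : ∀ a, A.neg a = A.dneg a) (h2 : ∀ a, A.neg (A.neg a) = a)
    (x y : D) : A.sup x (A.inf x y) = x := by rw [A.ax5b, aux_sup_idem A h1 h2]

lemma aux_le12 (h1 : ∀ a, A.neg a = A.dneg a) (h2 : ∀ a, A.neg (A.neg a) = a)
    {x y : D} (h : A.inf x y = x) : A.sup x y = y := by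
  calc A.sup x y = A.sup y x := A.ax2b x y
    _ = A.sup y (A.inf y x) := by rw [A.ax2a y x, h]
    _ = y := aux_absorb2 A h1 h2 y x

lemma aux_le21 (h2 : ∀ a, A.neg (A.neg a) = a)
    {x y : D} (h : A.sup x y = y) : A.inf x y = x := by
  rw [← h, aux_absorb1 A h2]

lemma aux_vee_absorb (h2 : ∀ a, A.neg (A.neg a) = a) (x y : D) :
    A.inf x (A.neg (A.inf (A.neg x) (A.neg y))) = x := by
  rw [A.ax7a, aux_inf_idem A h2]

lemma aux_sup_eq_vee (h1 : ∀ a, A.neg a = A.dneg a) (h2 : ∀ a, A.neg (A.neg a) = a)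
    (x y : D) : A.sup x y = A.neg (A.inf (A.neg x) (A.neg y)) := by
  set v := A.neg (A.inf (A.neg x) (A.neg y)) with hv
  set s := A.sup x y with hs
  have hxv : A.inf x v = x := aux_vee_absorb A h2 x y
  have hyv : A.inf y v = y := by
    rw [hv, A.ax2a (A.neg x) (A.neg y)]; exact aux_vee_absorb A h2 y x
  have hxs : A.inf x s = x := aux_absorb1 A h2 x y
  have hys : A.inf y s = y := by
    rw [hs, A.ax2b x y]; exact aux_absorb1 A h2 y x
  have hsv1 : A.inf s v = s := by
    apply aux_le21 A h2
    calc A.sup (A.sup x y) v = A.sup x (A.sup y v) := (A.ax3b x y v).symm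
      _ = A.sup x v := by rw [aux_le12 A h1 h2 hyv]
      _ = v := aux_le12 A h1 h2 hxv
  have hsv2 : A.inf s v = v := by
    have h6 := A.ax6a s x y
    rw [show A.inf s x = x from by rw [A.ax2a]; exact hxs,
        show A.inf s y = y from by rw [A.ax2a]; exact hys] at h6
    exact h6
  exact hsv1.symm.trans hsv2

lemma aux_neg_inf (h1 : ∀ a, A.neg a = A.dneg a) (h2 : ∀ a, A.neg (A.neg a) = a)
    (x y : D) : A.neg (A.inf x y) = A.sup (A.neg x) (A.neg y) := by
  rw [aux_sup_eq_vee A h1 h2, h2, h2]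

lemma aux_neg_sup (h1 : ∀ a, A.neg a = A.dneg a) (h2 : ∀ a, A.neg (A.neg a) = a)
    (x y : D) : A.neg (A.sup x y) = A.inf (A.neg x) (A.neg y) := by
  rw [aux_sup_eq_vee A h1 h2, h2]

lemma aux_inf_sup_distrib (h1 : ∀ a, A.neg a = A.dneg a) (h2 : ∀ a, A.neg (A.neg a) = a)
    (x y z : D) : A.inf x (A.sup y z) = A.sup (A.inf x y) (A.inf x z) := by
  rw [aux_sup_eq_vee A h1 h2 y z, aux_sup_eq_vee A h1 h2 (A.inf x y) (A.inf x z)]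
  exact A.ax6a x y z

lemma aux_sup_inf_distrib (h1 : ∀ a, A.neg a = A.dneg a) (h2 : ∀ a, A.neg (A.neg a) = a)
    (x y z : D) : A.sup x (A.inf y z) = A.inf (A.sup x y) (A.sup x z) := by
  have : A.neg (A.sup x (A.inf y z)) = A.neg (A.inf (A.sup x y) (A.sup x z)) := by
    rw [aux_neg_sup A h1 h2, aux_neg_inf A h1 h2 y z, aux_neg_inf A h1 h2,
        aux_neg_sup A h1 h2, aux_neg_sup A h1 h2,
        aux_inf_sup_distrib A h1 h2]
  calc A.sup x (A.inf y z) = A.neg (A.neg (A.sup x (A.inf y z))) := (h2 _).symm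
    _ = A.neg (A.neg (A.inf (A.sup x y) (A.sup x z))) := by rw [this]
    _ = _ := h2 _

lemma aux_sup_compl (h1 : ∀ a, A.neg a = A.dneg a) (h2 : ∀ a, A.neg (A.neg a) = a)
    (x : D) : A.sup x (A.neg x) = A.top := by
  rw [aux_sup_eq_vee A h1 h2, h2, A.ax2a, A.ax9a, A.ax10a, aux_inf_idem A h2]

lemma aux_sup_top (h1 : ∀ a, A.neg a = A.dneg a) (h2 : ∀ a, A.neg (A.neg a) = a)
    (x : D) : A.sup x A.top = A.top := by
  rw [← aux_sup_compl A h1 h2 x, A.ax3b, A.ax1b]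

lemma aux_bot_sup (h1 : ∀ a, A.neg a = A.dneg a) (h2 : ∀ a, A.neg (A.neg a) = a)
    (x : D) : A.sup A.bot x = x := by
  rw [← A.ax9a x, A.ax2b]; exact aux_absorb2 A h1 h2 x (A.neg x)

end Part2Aux

/-- Any Boolean algebra becomes a fully contextual and pure dBa with ⌟ := ¬;
conversely, a dBa with ¬a = ⌟a and ¬¬a = a is a Boolean algebra whose order is ⊑. -/
theorem stmt1 :
    (∀ (D : Type u) [BooleanAlgebra D], ∃ A : DBA D,
      (∀ x y : D, A.inf x y = x ⊓ y) ∧ (∀ x y : D, A.sup x y = x ⊔ y) ∧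
      (∀ x : D, A.neg x = xᶜ) ∧ (∀ x : D, A.dneg x = xᶜ) ∧
      A.top = ⊤ ∧ A.bot = ⊥ ∧ A.FullyContextual ∧ A.Pure) ∧
    (∀ (D : Type u) (A : DBA D),
      (∀ a, A.neg a = A.dneg a) → (∀ a, A.neg (A.neg a) = a) →
      ∃ B : BooleanAlgebra D,
        (∀ x y : D, B.inf x y = A.inf x y) ∧
        (∀ x y : D, B.sup x y = A.sup x y) ∧
        (∀ x : D, B.compl x = A.neg x) ∧
        B.top = A.top ∧ B.bot = A.bot ∧
        (∀ x y : D, B.le x y ↔ A.le x y)) := by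
  constructor
  · -- Part 1: Boolean algebra → dBa
    intro D _inst
    refine ⟨{ sup := (· ⊔ ·), inf := (· ⊓ ·), neg := compl, dneg := compl,
              top := ⊤, bot := ⊥,
              ax1a := by intros; simp
              ax2a := fun x y => inf_comm x y
              ax3a := fun x y z => (inf_assoc x y z).symm
              ax4a := by intros; simp
              ax5a := by intros; simp
              ax6a := by intros; simp [compl_inf, compl_compl, inf_sup_left]
              ax7a := by intros; simp [compl_inf]
              ax8a := by intros; simp
              ax9a := by intros; simp
              ax10a := by simp
              ax11a := by simp
              ax1b := by intros; simp
              ax2b := fun x y => sup_comm x y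
              ax3b := fun x y z => (sup_assoc x y z).symm
              ax4b := by intros; simp
              ax5b := by intros; simp
              ax6b := by intros; simp [compl_sup, compl_compl, sup_inf_left]
              ax7b := by intros; simp [compl_sup]
              ax8b := by intros; simp
              ax9b := by intros; simp
              ax10b := by simp
              ax11b := by simp
              ax12 := by intros; simp }, ?_, ?_, ?_, ?_, ?_, ?_, ?_, ?_⟩
    · intro x y; rfl
    · intro x y; rfl
    · intro x; rfl
    · intro x; rfl
    · rfl
    · rfl
    · constructor
      · intro x y hxy hyx
        simp only [DBA.le, inf_idem, sup_idem] at hxy hyx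
        exact le_antisymm (inf_eq_left.mp hxy.1) (inf_eq_left.mp hyx.1)
      · intro y x hy hx hyx
        simp only [inf_idem, sup_idem] at hyx
        refine ⟨y, ⟨?_, ?_⟩, ?_⟩
        · exact inf_idem y
        · simp only [sup_idem]; rw [hyx]
        · rintro z ⟨hz1, _⟩
          simp only [inf_idem] at hz1
          exact hz1
    · intro x; left; exact inf_idem x
  · -- Part 2: dBa with involutive negations → Boolean algebra
    intro D A h1 h2
    letI maxI : Max D := ⟨A.sup⟩
    letI minI : Min D := ⟨A.inf⟩
    letI L : Lattice D := Lattice.mk' A.ax2b (fun a b c => (A.ax3b a b c).symm)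
      A.ax2a (fun a b c => (A.ax3a a b c).symm)
      (aux_absorb2 A h1 h2) (aux_absorb1 A h2)
    letI DL : DistribLattice D :=
      { L with le_sup_inf := fun x y z =>
          le_of_eq (aux_sup_inf_distrib A h1 h2 x y z).symm }
    letI B : BooleanAlgebra D :=
      { DL with
        compl := A.neg
        top := A.top
        bot := A.bot
        inf_compl_le_bot := fun x => le_of_eq (A.ax9a x)
        top_le_sup_compl := fun x => le_of_eq (aux_sup_compl A h1 h2 x).symm
        le_top := fun a => sup_eq_right.mp (aux_sup_top A h1 h2 a)
        bot_le := fun a => sup_eq_right.mp (aux_bot_sup A h1 h2 a) }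
    refine ⟨B, fun x y => rfl, fun x y => rfl, fun x => rfl, rfl, rfl, ?_⟩
    intro x y
    have hle : B.le x y ↔ A.sup x y = y := Iff.rfl
    rw [hle]
    unfold DBA.le
    rw [aux_inf_idem A h2, aux_sup_idem A h1 h2]
    constructor
    · intro h
      exact ⟨aux_le21 A h2 h, h⟩
    · exact fun h => h.2
end

section
/- Let D and M be fully contextual double Boolean algebras. Then D is isomorphic to M if and only if D_p is isomorphic to M_p (as dBas). Moreover, every dBa isomorphism from the largest pure subalgebra D_p onto M_p extends uniquely to a dBa isomorphism from D onto M. -/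
universe u v

namespace DBA

variable {D : Type u} {E : Type v} (A : DBA D)

lemma inf_idem2 (x y : D) : A.inf (A.inf x y) (A.inf x y) = A.inf x y := by
  calc A.inf (A.inf x y) (A.inf x y)
      = A.inf (A.inf (A.inf x y) x) y := A.ax3a _ _ _
    _ = A.inf (A.inf x (A.inf x y)) y := by rw [A.ax2a (A.inf x y) x]
    _ = A.inf (A.inf (A.inf x x) y) y := by rw [A.ax3a x x y]
    _ = A.inf (A.inf x y) y := by rw [A.ax1a]
    _ = A.inf x (A.inf y y) := (A.ax3a _ _ _).symm
    _ = A.inf x y := by rw [A.ax2a x (A.inf y y), A.ax1a, A.ax2a y x]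

lemma sup_idem2 (x y : D) : A.sup (A.sup x y) (A.sup x y) = A.sup x y := by
  calc A.sup (A.sup x y) (A.sup x y)
      = A.sup (A.sup (A.sup x y) x) y := A.ax3b _ _ _
    _ = A.sup (A.sup x (A.sup x y)) y := by rw [A.ax2b (A.sup x y) x]
    _ = A.sup (A.sup (A.sup x x) y) y := by rw [A.ax3b x x y]
    _ = A.sup (A.sup x y) y := by rw [A.ax1b]
    _ = A.sup x (A.sup y y) := (A.ax3b _ _ _).symm
    _ = A.sup x y := by rw [A.ax2b x (A.sup y y), A.ax1b, A.ax2b y x]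

lemma negneg (x : D) : A.neg (A.neg x) = A.inf x x := by
  rw [← A.ax4a x]; exact A.ax8a x x

lemma dnegdneg (x : D) : A.dneg (A.dneg x) = A.sup x x := by
  rw [← A.ax4b x]; exact A.ax8b x x

lemma neg_idem (x : D) : A.inf (A.neg x) (A.neg x) = A.neg x := by
  rw [← A.negneg (A.neg x), A.negneg x]; exact A.ax4a x

lemma dneg_idem (x : D) : A.sup (A.dneg x) (A.dneg x) = A.dneg x := by
  rw [← A.dnegdneg (A.dneg x), A.dnegdneg x]; exact A.ax4b x

lemma top_sup2 : A.sup A.top A.top = A.top := by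
  rw [← A.ax9b A.bot]; exact A.sup_idem2 _ _

lemma bot_inf2 : A.inf A.bot A.bot = A.bot := by
  rw [← A.ax9a A.bot]; exact A.inf_idem2 _ _

lemma inf_split (x y : D) : A.inf x y = A.inf (A.inf x x) (A.inf y y) := by
  rw [A.ax1a, A.ax2a x (A.inf y y), A.ax1a, A.ax2a y x]

lemma sup_split (x y : D) : A.sup x y = A.sup (A.sup x x) (A.sup y y) := by
  rw [A.ax1b, A.ax2b x (A.sup y y), A.ax1b, A.ax2b y x]

lemma mem_Dp_inf (x y : D) : A.inf x y ∈ A.Dp := Or.inl (A.inf_idem2 x y)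
lemma mem_Dp_sup (x y : D) : A.sup x y ∈ A.Dp := Or.inr (A.sup_idem2 x y)
lemma mem_Dp_neg (x : D) : A.neg x ∈ A.Dp := Or.inl (A.neg_idem x)
lemma mem_Dp_dneg (x : D) : A.dneg x ∈ A.Dp := Or.inr (A.dneg_idem x)
lemma mem_Dp_top : A.top ∈ A.Dp := Or.inr A.top_sup2
lemma mem_Dp_bot : A.bot ∈ A.Dp := Or.inl A.bot_inf2

end DBA

/-- The key extension lemma: an isomorphism of the pure parts extends uniquely. -/
lemma dba_key {D : Type u} {E : Type v} (A : DBA D) (B : DBA E)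
    (hA : A.FullyContextual) (hB : B.FullyContextual)
    (g : D → E) (hg : Set.BijOn g A.Dp B.Dp) (hom : DBA.IsHomOn A B A.Dp g) :
    ∃! f : D → E, (Function.Bijective f ∧ DBA.IsHom A B f) ∧ Set.EqOn f g A.Dp := by
  obtain ⟨hom1, hom2, hom3, hom4, hom5, hom6⟩ := hom
  -- g of idempotents is idempotent, and compatibility transfers
  have Fex : ∀ x : D, ∃! z : E,
      B.inf z z = g (A.inf x x) ∧ B.sup z z = g (A.sup x x) := by
    intro x
    apply hB.2
    · rw [← hom1 _ (A.mem_Dp_inf x x) _ (A.mem_Dp_inf x x), A.inf_idem2]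
    · rw [← hom2 _ (A.mem_Dp_sup x x) _ (A.mem_Dp_sup x x), A.sup_idem2]
    · rw [← hom2 _ (A.mem_Dp_inf x x) _ (A.mem_Dp_inf x x),
        ← hom1 _ (A.mem_Dp_sup x x) _ (A.mem_Dp_sup x x), A.ax12]
  have hEx : ∀ x : D, ∃ z : E,
      B.inf z z = g (A.inf x x) ∧ B.sup z z = g (A.sup x x) :=
    fun x => (Fex x).exists
  choose f hf1 hf2 using hEx
  have hchar : ∀ x w, B.inf w w = g (A.inf x x) → B.sup w w = g (A.sup x x) →
      w = f x := fun x w hw1 hw2 => (Fex x).unique ⟨hw1, hw2⟩ ⟨hf1 x, hf2 x⟩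
  have heq : Set.EqOn f g A.Dp := fun z hz =>
    (hchar z (g z) (hom1 z hz z hz).symm (hom2 z hz z hz).symm).symm
  have hinf : ∀ x y, f (A.inf x y) = B.inf (f x) (f y) := by
    intro x y
    calc f (A.inf x y) = g (A.inf x y) := heq (A.mem_Dp_inf x y)
      _ = g (A.inf (A.inf x x) (A.inf y y)) := by rw [← A.inf_split]
      _ = B.inf (g (A.inf x x)) (g (A.inf y y)) :=
          hom1 _ (A.mem_Dp_inf x x) _ (A.mem_Dp_inf y y)
      _ = B.inf (B.inf (f x) (f x)) (B.inf (f y) (f y)) := by rw [hf1 x, hf1 y]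
      _ = B.inf (f x) (f y) := (B.inf_split _ _).symm
  have hsup : ∀ x y, f (A.sup x y) = B.sup (f x) (f y) := by
    intro x y
    calc f (A.sup x y) = g (A.sup x y) := heq (A.mem_Dp_sup x y)
      _ = g (A.sup (A.sup x x) (A.sup y y)) := by rw [← A.sup_split]
      _ = B.sup (g (A.sup x x)) (g (A.sup y y)) :=
          hom2 _ (A.mem_Dp_sup x x) _ (A.mem_Dp_sup y y)
      _ = B.sup (B.sup (f x) (f x)) (B.sup (f y) (f y)) := by rw [hf2 x, hf2 y]
      _ = B.sup (f x) (f y) := (B.sup_split _ _).symm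
  have hneg : ∀ x, f (A.neg x) = B.neg (f x) := by
    intro x
    calc f (A.neg x) = g (A.neg x) := heq (A.mem_Dp_neg x)
      _ = g (A.neg (A.inf x x)) := by rw [A.ax4a]
      _ = B.neg (g (A.inf x x)) := hom3 _ (A.mem_Dp_inf x x)
      _ = B.neg (B.inf (f x) (f x)) := by rw [hf1 x]
      _ = B.neg (f x) := B.ax4a _
  have hdneg : ∀ x, f (A.dneg x) = B.dneg (f x) := by
    intro x
    calc f (A.dneg x) = g (A.dneg x) := heq (A.mem_Dp_dneg x)
      _ = g (A.dneg (A.sup x x)) := by rw [A.ax4b]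
      _ = B.dneg (g (A.sup x x)) := hom4 _ (A.mem_Dp_sup x x)
      _ = B.dneg (B.sup (f x) (f x)) := by rw [hf2 x]
      _ = B.dneg (f x) := B.ax4b _
  have htop : f A.top = B.top := (heq A.mem_Dp_top).trans hom5
  have hbot : f A.bot = B.bot := (heq A.mem_Dp_bot).trans hom6
  have hinj : Function.Injective f := by
    intro x x' hxx
    have e1 : A.inf x x = A.inf x' x' := by
      apply hg.injOn (A.mem_Dp_inf x x) (A.mem_Dp_inf x' x')
      rw [← hf1 x, ← hf1 x', hxx]
    have e2 : A.sup x x = A.sup x' x' := by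
      apply hg.injOn (A.mem_Dp_sup x x) (A.mem_Dp_sup x' x')
      rw [← hf2 x, ← hf2 x', hxx]
    exact (hA.2 (A.inf x x) (A.sup x x) (A.inf_idem2 x x) (A.sup_idem2 x x)
      (A.ax12 x)).unique ⟨rfl, rfl⟩ ⟨e1.symm, e2.symm⟩
  have hsurj : Function.Surjective f := by
    intro w
    obtain ⟨u, hu, hgu⟩ := hg.surjOn (B.mem_Dp_inf w w)
    obtain ⟨v, hv, hgv⟩ := hg.surjOn (B.mem_Dp_sup w w)
    have hgu' : g (A.inf u u) = B.inf w w := by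
      rw [hom1 u hu u hu, hgu]; exact B.inf_idem2 w w
    have hgv' : g (A.sup v v) = B.sup w w := by
      rw [hom2 v hv v hv, hgv]; exact B.sup_idem2 w w
    have compat : A.sup (A.inf u u) (A.inf u u) = A.inf (A.sup v v) (A.sup v v) := by
      apply hg.injOn (A.mem_Dp_sup _ _) (A.mem_Dp_inf _ _)
      rw [hom2 _ (A.mem_Dp_inf u u) _ (A.mem_Dp_inf u u),
        hom1 _ (A.mem_Dp_sup v v) _ (A.mem_Dp_sup v v), hgu', hgv', B.ax12]
    obtain ⟨z, ⟨hz1, hz2⟩, -⟩ := hA.2 (A.inf u u) (A.sup v v)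
      (A.inf_idem2 u u) (A.sup_idem2 v v) compat
    exact ⟨z, (hchar z w (by rw [hz1, hgu']) (by rw [hz2, hgv'])).symm⟩
  refine ⟨f, ⟨⟨⟨hinj, hsurj⟩, hinf, hsup, hneg, hdneg, htop, hbot⟩, heq⟩, ?_⟩
  rintro f' ⟨⟨-, hhom'⟩, heq'⟩
  funext x
  exact hchar x (f' x)
    (by rw [← hhom'.1 x x]; exact heq' (A.mem_Dp_inf x x))
    (by rw [← hhom'.2.1 x x]; exact heq' (A.mem_Dp_sup x x))

/-- For fully contextual dBas D and M: D ≅ M iff D_p ≅ M_p, and every dBa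
isomorphism from D_p onto M_p extends uniquely to a dBa isomorphism from D onto M. -/
theorem stmt2 {D : Type u} {E : Type v} (A : DBA D) (B : DBA E)
    (hA : A.FullyContextual) (hB : B.FullyContextual) :
    ((∃ f : D → E, Function.Bijective f ∧ DBA.IsHom A B f) ↔
      (∃ g : D → E, Set.BijOn g A.Dp B.Dp ∧ DBA.IsHomOn A B A.Dp g)) ∧
    (∀ g : D → E, Set.BijOn g A.Dp B.Dp → DBA.IsHomOn A B A.Dp g →
      ∃! f : D → E, (Function.Bijective f ∧ DBA.IsHom A B f) ∧ Set.EqOn f g A.Dp) := by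
  constructor
  · constructor
    · rintro ⟨f, hbij, hhom⟩
      obtain ⟨hi, hs, hn, hd, ht, hb⟩ := hhom
      refine ⟨f, ⟨?_, ?_, ?_⟩, ?_⟩
      · intro x hx
        rcases hx with h | h
        · exact Or.inl (show B.inf (f x) (f x) = f x by rw [← hi]; exact congrArg f h)
        · exact Or.inr (show B.sup (f x) (f x) = f x by rw [← hs]; exact congrArg f h)
      · exact hbij.1.injOn
      · intro w hw
        obtain ⟨x, hx⟩ := hbij.2 w
        refine ⟨x, ?_, hx⟩
        rcases hw with h | h
        · exact Or.inl (hbij.1 (by rw [hi, hx]; exact h))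
        · exact Or.inr (hbij.1 (by rw [hs, hx]; exact h))
      · exact ⟨fun x _ y _ => hi x y, fun x _ y _ => hs x y,
          fun x _ => hn x, fun x _ => hd x, ht, hb⟩
    · rintro ⟨g, hg, hom⟩
      obtain ⟨f, ⟨hf, -⟩, -⟩ := dba_key A B hA hB g hg hom
      exact ⟨f, hf⟩
  · intro g hg hom
    exact dba_key A B hA hB g hg hom
end

section
/- Let M and D be double Boolean algebras and h: M → D a dBa homomorphism. Then: (i) for all a,b ∈ M, a ⊑ b implies h(a) ⊑ h(b); (ii) if I is a primary ideal of D then h⁻¹(I) is a primary ideal of M; (iii) if F is a primary filter of D then h⁻¹(F) is a primary filter of M. Moreover, if h is a dBa quasi-isomorphism then: (iv) if I is a primary ideal of M then h(I) is a primary ideal of D; (v) if F is a primary filter of M then h(F) is a primary filter of D. -/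
universe u v

section Stmt4Aux

universe w
variable {X : Type w}

lemma DBA.le_refl' (A : DBA X) (x : X) : A.le x x := ⟨rfl, rfl⟩

lemma DBA.sup_top (A : DBA X) (x : X) : A.sup x A.top = A.top := by
  conv_lhs => rw [← A.ax9b x, A.ax3b, A.ax1b]
  exact A.ax9b x

lemma DBA.inf_bot (A : DBA X) (x : X) : A.inf x A.bot = A.bot := by
  conv_lhs => rw [← A.ax9a x, A.ax3a, A.ax1a]
  exact A.ax9a x

lemma DBA.le_top (A : DBA X) (x : X) : A.le x A.top := by
  constructor
  · conv_lhs => rw [← A.ax9b x]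
    exact A.ax5a x (A.dneg x)
  · rw [A.sup_top x, A.sup_top A.top]

lemma DBA.bot_le (A : DBA X) (x : X) : A.le A.bot x := by
  constructor
  · rw [A.ax2a, A.inf_bot x, A.inf_bot A.bot]
  · rw [A.ax2b]
    conv_lhs => rw [← A.ax9a x]
    exact A.ax5b x (A.neg x)

lemma DBA.ideal_top (A : DBA X) {I : Set X} (hI : A.IsIdeal I) (ht : A.top ∈ I) :
    I = Set.univ := by
  ext z; simp only [Set.mem_univ, iff_true]
  exact hI.2 A.top ht z (A.le_top z)

lemma DBA.filter_bot (A : DBA X) {F : Set X} (hF : A.IsFilter F) (hb : A.bot ∈ F) :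
    F = Set.univ := by
  ext z; simp only [Set.mem_univ, iff_true]
  exact hF.2 A.bot hb z (A.bot_le z)

end Stmt4Aux

/-- dBa homomorphisms are monotone for ⊑, preimages of primary ideals
(filters) are primary ideals (filters), and under a quasi-isomorphism images of primary
ideals (filters) are primary ideals (filters). -/
theorem stmt4 {M : Type u} {D : Type v} (Am : DBA M) (Ad : DBA D) (h : M → D)
    (hh : DBA.IsHom Am Ad h) :
    (∀ a b : M, Am.le a b → Ad.le (h a) (h b)) ∧
    (∀ I : Set D, Ad.IsPrimaryIdeal I → Am.IsPrimaryIdeal (h ⁻¹' I)) ∧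
    (∀ F : Set D, Ad.IsPrimaryFilter F → Am.IsPrimaryFilter (h ⁻¹' F)) ∧
    (Function.Surjective h → (∀ x y : M, Am.le x y ↔ Ad.le (h x) (h y)) →
      (∀ I : Set M, Am.IsPrimaryIdeal I → Ad.IsPrimaryIdeal (h '' I)) ∧
      (∀ F : Set M, Am.IsPrimaryFilter F → Ad.IsPrimaryFilter (h '' F))) := by
  obtain ⟨hinf, hsup, hneg, hdneg, htop, hbot⟩ := hh
  have mono : ∀ a b : M, Am.le a b → Ad.le (h a) (h b) := by
    rintro a b ⟨h1, h2⟩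
    exact ⟨by rw [← hinf, ← hinf, h1], by rw [← hsup, ← hsup, h2]⟩
  refine ⟨mono, ?_, ?_, ?_⟩
  · rintro I ⟨⟨Isup, Idown⟩, Iprop, Iprim⟩
    refine ⟨⟨?_, ?_⟩, ?_, ?_⟩
    · intro x hx y hy
      simp only [Set.mem_preimage] at *
      rw [hsup]; exact Isup _ hx _ hy
    · intro x hx z hz
      exact Idown _ hx _ (mono _ _ hz)
    · intro hu
      have : Am.top ∈ h ⁻¹' I := hu ▸ Set.mem_univ _
      have : Ad.top ∈ I := by rwa [Set.mem_preimage, htop] at this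
      exact Iprop (Ad.ideal_top ⟨Isup, Idown⟩ this)
    · intro x
      rcases Iprim (h x) with hx | hx
      · exact Or.inl hx
      · right; simpa [Set.mem_preimage, hdneg] using hx
  · rintro F ⟨⟨Finf, Fup⟩, Fprop, Fprim⟩
    refine ⟨⟨?_, ?_⟩, ?_, ?_⟩
    · intro x hx y hy
      simp only [Set.mem_preimage] at *
      rw [hinf]; exact Finf _ hx _ hy
    · intro x hx z hz
      exact Fup _ hx _ (mono _ _ hz)
    · intro hu
      have : Am.bot ∈ h ⁻¹' F := hu ▸ Set.mem_univ _
      have : Ad.bot ∈ F := by rwa [Set.mem_preimage, hbot] at this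
      exact Fprop (Ad.filter_bot ⟨Finf, Fup⟩ this)
    · intro x
      rcases Fprim (h x) with hx | hx
      · exact Or.inl hx
      · right; simpa [Set.mem_preimage, hneg] using hx
  · intro hsurj hqi
    constructor
    · rintro I ⟨⟨Isup, Idown⟩, Iprop, Iprim⟩
      refine ⟨⟨?_, ?_⟩, ?_, ?_⟩
      · rintro x ⟨a, ha, rfl⟩ y ⟨b, hb, rfl⟩
        exact ⟨Am.sup a b, Isup _ ha _ hb, hsup a b⟩
      · rintro x ⟨a, ha, rfl⟩ z hz
        obtain ⟨w, rfl⟩ := hsurj z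
        exact ⟨w, Idown _ ha _ ((hqi w a).2 hz), rfl⟩
      · intro hu
        have : Ad.top ∈ h '' I := hu ▸ Set.mem_univ _
        obtain ⟨a, ha, hae⟩ := this
        have : Am.le Am.top a := (hqi _ _).2 (by rw [htop, hae]; exact Ad.le_refl' _)
        have : Am.top ∈ I := Idown _ ha _ this
        exact Iprop (Am.ideal_top ⟨Isup, Idown⟩ this)
      · intro y
        obtain ⟨x, rfl⟩ := hsurj y
        rcases Iprim x with hx | hx
        · exact Or.inl ⟨x, hx, rfl⟩
        · exact Or.inr ⟨Am.dneg x, hx, hdneg x⟩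
    · rintro F ⟨⟨Finf, Fup⟩, Fprop, Fprim⟩
      refine ⟨⟨?_, ?_⟩, ?_, ?_⟩
      · rintro x ⟨a, ha, rfl⟩ y ⟨b, hb, rfl⟩
        exact ⟨Am.inf a b, Finf _ ha _ hb, hinf a b⟩
      · rintro x ⟨a, ha, rfl⟩ z hz
        obtain ⟨w, rfl⟩ := hsurj z
        exact ⟨w, Fup _ ha _ ((hqi a w).2 hz), rfl⟩
      · intro hu
        have : Ad.bot ∈ h '' F := hu ▸ Set.mem_univ _
        obtain ⟨a, ha, hae⟩ := this
        have : Am.le a Am.bot := (hqi _ _).2 (by rw [hbot, hae]; exact Ad.le_refl' _)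
        have : Am.bot ∈ F := Fup _ ha _ this
        exact Fprop (Am.filter_bot ⟨Finf, Fup⟩ this)
      · intro y
        obtain ⟨x, rfl⟩ := hsurj y
        rcases Fprim x with hx | hx
        · exact Or.inl ⟨x, hx, rfl⟩
        · exact Or.inr ⟨Am.neg x, hx, hneg x⟩
end

section
/- Let K^T = ((X,τ₁),(Y,τ₂),R) be a CTSCR. Then the set of clopen object oriented protoconcepts of K^T is closed under the operations ⊓, ⊔, ¬, ⌟ and contains ⊤ and ⊥, and with these operations it satisfies all the axioms of a double Boolean algebra; moreover this dBa is fully contextual: its quasi-order ⊑ (given on pairs by (A,B) ⊑ (C,D) iff C ⊆ A and D ⊆ B) is a partial order, and for any clopen protoconcepts u with u⊓u = u and v with v⊔v = v satisfying u⊔u = v⊓v, (A,D) with u = (A,B), v = (C,D) is the unique clopen protoconcept z with z⊓z = u and z⊔z = v. -/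
universe u v

section AuxProof

variable {X : Type u} {Y : Type v}

lemma odia_obbox_subset (R : X → Y → Prop) (A : Set X) :
    odia R (obbox R A) ⊆ A := fun g ⟨m, hm, hgm⟩ => hm g hgm

lemma subset_obbox_odia (R : X → Y → Prop) (B : Set Y) :
    B ⊆ obbox R (odia R B) := fun m hm g hgm => ⟨m, hm, hgm⟩

lemma odia_mono (R : X → Y → Prop) {B C : Set Y} (h : B ⊆ C) :
    odia R B ⊆ odia R C := fun g ⟨m, hm, hgm⟩ => ⟨m, h hm, hgm⟩

lemma obbox_mono (R : X → Y → Prop) {A C : Set X} (h : A ⊆ C) :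
    obbox R A ⊆ obbox R C := fun m hm g hgm => h (hm g hgm)

lemma odia_obbox_odia (R : X → Y → Prop) (B : Set Y) :
    odia R (obbox R (odia R B)) = odia R B :=
  subset_antisymm (odia_obbox_subset R _) (odia_mono R (subset_obbox_odia R B))

lemma obbox_odia_obbox (R : X → Y → Prop) (A : Set X) :
    obbox R (odia R (obbox R A)) = obbox R A :=
  subset_antisymm (obbox_mono R (odia_obbox_subset R A)) (subset_obbox_odia R _)

lemma odia_empty (R : X → Y → Prop) : odia R (∅ : Set Y) = ∅ := by
  ext g; simp [odia]

lemma obbox_univ (R : X → Y → Prop) : obbox R (Set.univ : Set X) = Set.univ := by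
  ext m; simp [obbox]

lemma compl_obbox (R : X → Y → Prop) (A : Set X) : (obbox R A)ᶜ = obdia R Aᶜ := by
  ext m; simp only [obbox, obdia, Set.mem_compl_iff, Set.mem_setOf_eq]
  push_neg; tauto

lemma compl_odia (R : X → Y → Prop) (B : Set Y) : (odia R B)ᶜ = obox R Bᶜ := by
  ext g; simp only [odia, obox, Set.mem_compl_iff, Set.mem_setOf_eq]
  push_neg; tauto

variable [TopologicalSpace X] [TopologicalSpace Y]

lemma clopen_obbox {R : X → Y → Prop} (hRinv : ContRelInv R) {A : Set X}
    (hA : IsClopen A) : IsClopen (obbox R A) :=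
  ⟨isOpen_compl_iff.mp (compl_obbox R A ▸ (hRinv Aᶜ hA.compl.isOpen).1),
   (hRinv A hA.isOpen).2⟩

lemma clopen_odia {R : X → Y → Prop} (hR : ContRel R) {B : Set Y}
    (hB : IsClopen B) : IsClopen (odia R B) :=
  ⟨isOpen_compl_iff.mp (compl_odia R B ▸ (hR Bᶜ hB.compl.isOpen).2),
   (hR B hB.isOpen).1⟩

lemma clopenProto_pinf {R : X → Y → Prop} (hRinv : ContRelInv R)
    {p q : Set X × Set Y} (hp : IsClopenProto R p) (hq : IsClopenProto R q) :
    IsClopenProto R (pinf R p q) :=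
  ⟨rfl, hp.2.1.union hq.2.1, clopen_obbox hRinv (hp.2.1.union hq.2.1)⟩

lemma clopenProto_psup {R : X → Y → Prop} (hR : ContRel R)
    {p q : Set X × Set Y} (hp : IsClopenProto R p) (hq : IsClopenProto R q) :
    IsClopenProto R (psup R p q) :=
  ⟨odia_obbox_odia R _, clopen_odia hR (hp.2.2.inter hq.2.2), hp.2.2.inter hq.2.2⟩

lemma clopenProto_pneg {R : X → Y → Prop} (hRinv : ContRelInv R)
    {p : Set X × Set Y} (hp : IsClopenProto R p) :
    IsClopenProto R (pneg R p) :=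
  ⟨rfl, hp.2.1.compl, clopen_obbox hRinv hp.2.1.compl⟩

lemma clopenProto_pdneg {R : X → Y → Prop} (hR : ContRel R)
    {p : Set X × Set Y} (hp : IsClopenProto R p) :
    IsClopenProto R (pdneg R p) :=
  ⟨odia_obbox_odia R _, clopen_odia hR hp.2.2.compl, hp.2.2.compl⟩

lemma clopenProto_ptop (R : X → Y → Prop) :
    IsClopenProto R (ptop : Set X × Set Y) := by
  refine ⟨?_, isClopen_empty, isClopen_empty⟩
  show odia R (obbox R (∅ : Set X)) = odia R (∅ : Set Y)
  rw [odia_empty]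
  exact Set.subset_empty_iff.mp (odia_obbox_subset R ∅)

lemma clopenProto_pbot (R : X → Y → Prop) :
    IsClopenProto R (pbot : Set X × Set Y) := by
  refine ⟨?_, isClopen_univ, isClopen_univ⟩
  show odia R (obbox R Set.univ) = odia R Set.univ
  rw [obbox_univ]

lemma pair_box_congr (R : X → Y → Prop) {A B : Set X} (h : A = B) :
    ((A, obbox R A) : Set X × Set Y) = (B, obbox R B) := by rw [h]

lemma pair_dia_congr (R : X → Y → Prop) {A B : Set Y} (h : A = B) :
    ((odia R A, A) : Set X × Set Y) = (odia R B, B) := by rw [h]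

/-- The double Boolean algebra of clopen object oriented protoconcepts. -/
def protoDBA (R : X → Y → Prop) (hR : ContRel R) (hRinv : ContRelInv R) :
    DBA {p : Set X × Set Y // IsClopenProto R p} where
  inf p q := ⟨pinf R p.val q.val, clopenProto_pinf hRinv p.2 q.2⟩
  sup p q := ⟨psup R p.val q.val, clopenProto_psup hR p.2 q.2⟩
  neg p := ⟨pneg R p.val, clopenProto_pneg hRinv p.2⟩
  dneg p := ⟨pdneg R p.val, clopenProto_pdneg hR p.2⟩
  top := ⟨ptop, clopenProto_ptop R⟩
  bot := ⟨pbot, clopenProto_pbot R⟩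
  ax1a x y := by
    apply Subtype.ext; simp only [pinf]
    exact pair_box_congr R (by rw [Set.union_self])
  ax2a x y := by
    apply Subtype.ext; simp only [pinf]
    exact pair_box_congr R (Set.union_comm _ _)
  ax3a x y z := by
    apply Subtype.ext; simp only [pinf]
    exact pair_box_congr R (Set.union_assoc _ _ _).symm
  ax4a x := by
    apply Subtype.ext; simp only [pinf, pneg]
    exact pair_box_congr R (by rw [Set.union_self])
  ax5a x y := by
    apply Subtype.ext; simp only [pinf, psup]
    refine pair_box_congr R ?_
    rw [Set.union_self, Set.union_eq_left]
    exact (odia_mono R Set.inter_subset_left).trans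
      (x.2.1 ▸ odia_obbox_subset R x.val.1)
  ax6a x y z := by
    apply Subtype.ext; simp only [pinf, pneg]
    refine pair_box_congr R ?_
    ext g
    simp only [Set.mem_union, Set.mem_compl_iff, Set.mem_union]
    tauto
  ax7a x y := by
    apply Subtype.ext; simp only [pinf, pneg]
    refine pair_box_congr R ?_
    ext g
    simp only [Set.mem_union, Set.mem_compl_iff]
    tauto
  ax8a x y := by
    apply Subtype.ext; simp only [pinf, pneg]
    exact pair_box_congr R (compl_compl _)
  ax9a x := by
    apply Subtype.ext; simp only [pinf, pneg, pbot]
    rw [Set.union_compl_self, obbox_univ]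
  ax10a := by
    apply Subtype.ext; simp only [pinf, pneg, pbot, ptop]
    exact pair_box_congr R (by simp)
  ax11a := by
    apply Subtype.ext; simp only [pneg, ptop, pbot]
    rw [Set.compl_empty, obbox_univ]
  ax1b x y := by
    apply Subtype.ext; simp only [psup]
    exact pair_dia_congr R (by rw [Set.inter_self])
  ax2b x y := by
    apply Subtype.ext; simp only [psup]
    exact pair_dia_congr R (Set.inter_comm _ _)
  ax3b x y z := by
    apply Subtype.ext; simp only [psup]
    exact pair_dia_congr R (Set.inter_assoc _ _ _).symm
  ax4b x := by
    apply Subtype.ext; simp only [psup, pdneg]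
    exact pair_dia_congr R (by rw [Set.inter_self])
  ax5b x y := by
    apply Subtype.ext; simp only [psup, pinf]
    refine pair_dia_congr R ?_
    rw [Set.inter_self, Set.inter_eq_left]
    calc x.val.2 ⊆ obbox R (odia R x.val.2) := subset_obbox_odia R _
      _ = obbox R (odia R (obbox R x.val.1)) := by rw [x.2.1]
      _ = obbox R x.val.1 := obbox_odia_obbox R _
      _ ⊆ obbox R (x.val.1 ∪ y.val.1) := obbox_mono R Set.subset_union_left
  ax6b x y z := by
    apply Subtype.ext; simp only [psup, pdneg]
    refine pair_dia_congr R ?_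
    ext m
    simp only [Set.mem_inter_iff, Set.mem_compl_iff]
    tauto
  ax7b x y := by
    apply Subtype.ext; simp only [psup, pdneg]
    refine pair_dia_congr R ?_
    ext m
    simp only [Set.mem_inter_iff, Set.mem_compl_iff]
    tauto
  ax8b x y := by
    apply Subtype.ext; simp only [psup, pdneg]
    exact pair_dia_congr R (compl_compl _)
  ax9b x := by
    apply Subtype.ext; simp only [psup, pdneg, ptop]
    rw [Set.inter_compl_self, odia_empty]
  ax10b := by
    apply Subtype.ext; simp only [psup, pdneg, pbot, ptop]
    exact pair_dia_congr R (by simp)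
  ax11b := by
    apply Subtype.ext; simp only [pdneg, ptop, pbot]
    rw [Set.compl_univ, odia_empty]
  ax12 x := by
    apply Subtype.ext; simp only [psup, pinf, Set.union_self, Set.inter_self]
    refine Prod.ext_iff.mpr ⟨x.2.1, ?_⟩
    have h : odia R x.val.2 = odia R (obbox R x.val.1) := x.2.1.symm
    rw [h, obbox_odia_obbox]

end AuxProof

/-- For a CTSCR, the clopen object oriented protoconcepts are closed under
⊓, ⊔, ¬, ⌟ and contain ⊤, ⊥; they form a double Boolean algebra which is fully
contextual, with quasi-order given on pairs by reverse componentwise inclusion, and the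
unique z with z⊓z = u, z⊔z = v is (A,D) where u = (A,B), v = (C,D). -/
theorem stmt6 {X : Type u} {Y : Type v} [TopologicalSpace X] [TopologicalSpace Y]
    (R : X → Y → Prop) (hR : ContRel R) (hRinv : ContRelInv R) :
    (∀ p q : Set X × Set Y, IsClopenProto R p → IsClopenProto R q →
        IsClopenProto R (pinf R p q) ∧ IsClopenProto R (psup R p q)) ∧
    (∀ p : Set X × Set Y, IsClopenProto R p →
        IsClopenProto R (pneg R p) ∧ IsClopenProto R (pdneg R p)) ∧
    IsClopenProto R (ptop : Set X × Set Y) ∧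
    IsClopenProto R (pbot : Set X × Set Y) ∧
    ∃ dba : DBA {p : Set X × Set Y // IsClopenProto R p},
      (∀ p q, (dba.inf p q).val = pinf R p.val q.val) ∧
      (∀ p q, (dba.sup p q).val = psup R p.val q.val) ∧
      (∀ p, (dba.neg p).val = pneg R p.val) ∧
      (∀ p, (dba.dneg p).val = pdneg R p.val) ∧
      dba.top.val = (ptop : Set X × Set Y) ∧
      dba.bot.val = (pbot : Set X × Set Y) ∧
      (∀ p q, dba.le p q ↔ ple p.val q.val) ∧
      dba.FullyContextual ∧
      (∀ u v, dba.inf u u = u → dba.sup v v = v → dba.sup u u = dba.inf v v →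
        ∃ z, z.val = (u.val.1, v.val.2) ∧ dba.inf z z = u ∧ dba.sup z z = v ∧
          ∀ z', dba.inf z' z' = u → dba.sup z' z' = v → z' = z) := by
  refine ⟨fun p q hp hq => ⟨clopenProto_pinf hRinv hp hq, clopenProto_psup hR hp hq⟩,
    fun p hp => ⟨clopenProto_pneg hRinv hp, clopenProto_pdneg hR hp⟩,
    clopenProto_ptop R, clopenProto_pbot R,
    protoDBA R hR hRinv, fun _ _ => rfl, fun _ _ => rfl, fun _ => rfl, fun _ => rfl,
    rfl, rfl, ?_, ?_, ?_⟩
  · -- le iff ple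
    intro p q
    constructor
    · intro h
      obtain ⟨h1, h2⟩ := h
      have e1 : p.val.1 ∪ q.val.1 = p.val.1 ∪ p.val.1 :=
        congrArg (fun z : {p : Set X × Set Y // IsClopenProto R p} => z.val.1) h1
      rw [Set.union_self] at e1
      have e2 : p.val.2 ∩ q.val.2 = q.val.2 ∩ q.val.2 :=
        congrArg (fun z : {p : Set X × Set Y // IsClopenProto R p} => z.val.2) h2
      rw [Set.inter_self] at e2
      exact ⟨Set.union_eq_left.mp e1, Set.inter_eq_right.mp e2⟩
    · intro h
      refine ⟨Subtype.ext ?_, Subtype.ext ?_⟩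
      · show pinf R p.val q.val = pinf R p.val p.val
        exact pair_box_congr R (by rw [Set.union_self]; exact Set.union_eq_left.mpr h.1)
      · show psup R p.val q.val = psup R q.val q.val
        exact pair_dia_congr R (by rw [Set.inter_self]; exact Set.inter_eq_right.mpr h.2)
  all_goals {
    have key : ∀ u v : {p : Set X × Set Y // IsClopenProto R p},
        (protoDBA R hR hRinv).inf u u = u → (protoDBA R hR hRinv).sup v v = v →
        (protoDBA R hR hRinv).sup u u = (protoDBA R hR hRinv).inf v v →
        ∃ z : {p : Set X × Set Y // IsClopenProto R p},
          z.val = (u.val.1, v.val.2) ∧ (protoDBA R hR hRinv).inf z z = u ∧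
          (protoDBA R hR hRinv).sup z z = v ∧
          ∀ z', (protoDBA R hR hRinv).inf z' z' = u →
            (protoDBA R hR hRinv).sup z' z' = v → z' = z := by
      intro u v hu hv huv
      have e1 : obbox R (u.val.1 ∪ u.val.1) = u.val.2 :=
        congrArg (fun z : {p : Set X × Set Y // IsClopenProto R p} => z.val.2)
          hu
      rw [Set.union_self] at e1
      have e2 : odia R (v.val.2 ∩ v.val.2) = v.val.1 :=
        congrArg (fun z : {p : Set X × Set Y // IsClopenProto R p} => z.val.1) hv
      rw [Set.inter_self] at e2
      have e3 : odia R (u.val.2 ∩ u.val.2) = v.val.1 ∪ v.val.1 :=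
        congrArg (fun z : {p : Set X × Set Y // IsClopenProto R p} => z.val.1) huv
      rw [Set.inter_self, Set.union_self] at e3
      have hproto : IsProto R ((u.val.1, v.val.2) : Set X × Set Y) := by
        show odia R (obbox R u.val.1) = odia R v.val.2
        calc odia R (obbox R u.val.1) = odia R u.val.2 := u.2.1
          _ = v.val.1 := e3
          _ = odia R v.val.2 := e2.symm
      refine ⟨⟨(u.val.1, v.val.2), hproto, u.2.2.1, v.2.2.2⟩, rfl, ?_, ?_, ?_⟩
      · apply Subtype.ext
        show ((u.val.1 ∪ u.val.1, obbox R (u.val.1 ∪ u.val.1)) : Set X × Set Y) = u.val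
        rw [Set.union_self, e1]
      · apply Subtype.ext
        show ((odia R (v.val.2 ∩ v.val.2), v.val.2 ∩ v.val.2) : Set X × Set Y) = v.val
        rw [Set.inter_self, e2]
      · intro z' h1 h2
        have f1 : z'.val.1 ∪ z'.val.1 = u.val.1 :=
          congrArg (fun z : {p : Set X × Set Y // IsClopenProto R p} => z.val.1) h1
        rw [Set.union_self] at f1
        have f2 : z'.val.2 ∩ z'.val.2 = v.val.2 :=
          congrArg (fun z : {p : Set X × Set Y // IsClopenProto R p} => z.val.2) h2
        rw [Set.inter_self] at f2
        apply Subtype.ext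
        exact Prod.ext_iff.mpr ⟨f1, f2⟩
    first
    | -- FullyContextual
      refine ⟨?_, ?_⟩
      · intro x y hxy hyx
        obtain ⟨h1, h2⟩ := hxy
        obtain ⟨h3, h4⟩ := hyx
        have e1 : x.val.1 ∪ y.val.1 = x.val.1 ∪ x.val.1 :=
          congrArg (fun z : {p : Set X × Set Y // IsClopenProto R p} => z.val.1) h1
        rw [Set.union_self] at e1
        have e2 : x.val.2 ∩ y.val.2 = y.val.2 ∩ y.val.2 :=
          congrArg (fun z : {p : Set X × Set Y // IsClopenProto R p} => z.val.2) h2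
        rw [Set.inter_self] at e2
        have e3 : y.val.1 ∪ x.val.1 = y.val.1 ∪ y.val.1 :=
          congrArg (fun z : {p : Set X × Set Y // IsClopenProto R p} => z.val.1) h3
        rw [Set.union_self] at e3
        have e4 : y.val.2 ∩ x.val.2 = x.val.2 ∩ x.val.2 :=
          congrArg (fun z : {p : Set X × Set Y // IsClopenProto R p} => z.val.2) h4
        rw [Set.inter_self] at e4
        apply Subtype.ext
        refine Prod.ext_iff.mpr ⟨?_, ?_⟩
        · exact subset_antisymm (Set.union_eq_left.mp e3) (Set.union_eq_left.mp e1)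
        · exact subset_antisymm (Set.inter_eq_right.mp e4) (Set.inter_eq_right.mp e2)
      · intro y x h1 h2 h3
        obtain ⟨z, _, hz1, hz2, huniq⟩ := key y x h1 h2 h3
        exact ⟨z, ⟨hz1, hz2⟩, fun z' hz' => huniq z' hz'.1 hz'.2⟩
    | -- explicit form
      exact key
  }
end

section
/- Let K₁^T and K₂^T be CTSCRs and f = (α,β) a CTSCR-homeomorphism from K₁^T to K₂^T. Then the map f_{αβ} defined by f_{αβ}((A,B)) := (α⁻¹(A), β⁻¹(B)) is a dBa isomorphism from the algebra of clopen object oriented protoconcepts of K₂^T onto the algebra of clopen object oriented protoconcepts of K₁^T (i.e., it is well defined, bijective, and preserves ⊓, ⊔, ¬, ⌟, ⊤, ⊥). Moreover, the restriction of f_{αβ} to the clopen object oriented semiconcepts of K₂^T is a dBa isomorphism onto the clopen object oriented semiconcepts of K₁^T. -/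
universe u v

section Helpers

variable {G : Type*} {M : Type*} {G' : Type*} {M' : Type*}

lemma odia_pre (R : G → M → Prop) (R' : G' → M' → Prop) (α : G ≃ G') (β : M ≃ M')
    (hrel : ∀ g m, R g m ↔ R' (α g) (β m)) (B : Set M') :
    odia R (β ⁻¹' B) = α ⁻¹' odia R' B := by
  ext g
  constructor
  · rintro ⟨m, hm, h⟩
    exact ⟨β m, hm, (hrel g m).1 h⟩
  · rintro ⟨m', hm', h⟩
    refine ⟨β.symm m', by simpa using hm', ?_⟩
    rw [hrel]
    simpa using h

lemma obbox_pre (R : G → M → Prop) (R' : G' → M' → Prop) (α : G ≃ G') (β : M ≃ M')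
    (hrel : ∀ g m, R g m ↔ R' (α g) (β m)) (A : Set G') :
    obbox R (α ⁻¹' A) = β ⁻¹' obbox R' A := by
  ext m
  constructor
  · intro h g' hg'
    have : R (α.symm g') m := by rw [hrel]; simpa using hg'
    simpa using h _ this
  · intro h g hg
    exact h (α g) ((hrel g m).1 hg)

lemma proto_pre (R : G → M → Prop) (R' : G' → M' → Prop) (α : G ≃ G') (β : M ≃ M')
    (hrel : ∀ g m, R g m ↔ R' (α g) (β m)) (p : Set G' × Set M') (hp : IsProto R' p) :
    IsProto R (pmap (⇑α) (⇑β) p) := by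
  unfold IsProto pmap at *
  simp only [obbox_pre R R' α β hrel, odia_pre R R' α β hrel, hp]

lemma semi_pre (R : G → M → Prop) (R' : G' → M' → Prop) (α : G ≃ G') (β : M ≃ M')
    (hrel : ∀ g m, R g m ↔ R' (α g) (β m)) (p : Set G' × Set M') (hp : IsSemi R' p) :
    IsSemi R (pmap (⇑α) (⇑β) p) := by
  unfold IsSemi pmap at *
  rcases hp with h | h
  · left; rw [obbox_pre R R' α β hrel, h]
  · right; rw [odia_pre R R' α β hrel, h]

lemma hrel_symm {R : G → M → Prop} {R' : G' → M' → Prop} {α : G ≃ G'} {β : M ≃ M'}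
    (hrel : ∀ g m, R g m ↔ R' (α g) (β m)) :
    ∀ g m, R' g m ↔ R (α.symm g) (β.symm m) := by
  intro g m
  rw [hrel]
  simp

lemma pmap_comp (α : G ≃ G') (β : M ≃ M') (q : Set G × Set M) :
    pmap (⇑α) (⇑β) (pmap (⇑α.symm) (⇑β.symm) q) = q := by
  unfold pmap
  simp [← Set.preimage_comp]

lemma pmap_inj (α : G ≃ G') (β : M ≃ M') :
    Function.Injective (pmap (⇑α) (⇑β) : Set G' × Set M' → Set G × Set M) := by
  intro p q h
  unfold pmap at h
  have h1 := congrArg Prod.fst h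
  have h2 := congrArg Prod.snd h
  simp only at h1 h2
  exact Prod.ext (Set.preimage_injective.mpr α.surjective h1)
    (Set.preimage_injective.mpr β.surjective h2)

end Helpers

/-- A CTSCR-homeomorphism (α,β) : K₁ → K₂ induces, via
(A,B) ↦ (α⁻¹(A), β⁻¹(B)), a dBa isomorphism from the clopen protoconcepts of K₂ onto
those of K₁, restricting to a dBa isomorphism on clopen semiconcepts. -/
theorem stmt9 {X₁ : Type*} {Y₁ : Type*} {X₂ : Type*} {Y₂ : Type*}
    [TopologicalSpace X₁] [TopologicalSpace Y₁] [TopologicalSpace X₂] [TopologicalSpace Y₂]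
    (R₁ : X₁ → Y₁ → Prop) (R₂ : X₂ → Y₂ → Prop)
    (hR₁ : ContRel R₁) (hR₁inv : ContRelInv R₁)
    (hR₂ : ContRel R₂) (hR₂inv : ContRelInv R₂)
    (α : X₁ ≃ₜ X₂) (β : Y₁ ≃ₜ Y₂) (hrel : ∀ g m, R₁ g m ↔ R₂ (α g) (β m)) :
    (∀ p, IsClopenProto R₂ p → IsClopenProto R₁ (pmap (⇑α) (⇑β) p)) ∧
    Set.BijOn (pmap (⇑α) (⇑β)) {p | IsClopenProto R₂ p} {p | IsClopenProto R₁ p} ∧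
    (∀ p q, IsClopenProto R₂ p → IsClopenProto R₂ q →
        pmap (⇑α) (⇑β) (pinf R₂ p q) = pinf R₁ (pmap (⇑α) (⇑β) p) (pmap (⇑α) (⇑β) q) ∧
        pmap (⇑α) (⇑β) (psup R₂ p q) = psup R₁ (pmap (⇑α) (⇑β) p) (pmap (⇑α) (⇑β) q)) ∧
    (∀ p, IsClopenProto R₂ p →
        pmap (⇑α) (⇑β) (pneg R₂ p) = pneg R₁ (pmap (⇑α) (⇑β) p) ∧
        pmap (⇑α) (⇑β) (pdneg R₂ p) = pdneg R₁ (pmap (⇑α) (⇑β) p)) ∧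
    pmap (⇑α) (⇑β) (ptop : Set X₂ × Set Y₂) = (ptop : Set X₁ × Set Y₁) ∧
    pmap (⇑α) (⇑β) (pbot : Set X₂ × Set Y₂) = (pbot : Set X₁ × Set Y₁) ∧
    Set.BijOn (pmap (⇑α) (⇑β)) {p | IsClopenSemi R₂ p} {p | IsClopenSemi R₁ p} := by

  have hrel' := hrel_symm hrel
  have clo : ∀ p : Set X₂ × Set Y₂, IsClopen p.1 → IsClopen p.2 →
      IsClopen (pmap (⇑α) (⇑β) p).1 ∧ IsClopen (pmap (⇑α) (⇑β) p).2 := fun p h1 h2 =>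
    ⟨h1.preimage α.continuous, h2.preimage β.continuous⟩
  have clo' : ∀ p : Set X₁ × Set Y₁, IsClopen p.1 → IsClopen p.2 →
      IsClopen (pmap (⇑α.symm) (⇑β.symm) p).1 ∧ IsClopen (pmap (⇑α.symm) (⇑β.symm) p).2 :=
    fun p h1 h2 => ⟨h1.preimage α.symm.continuous, h2.preimage β.symm.continuous⟩
  have mapsP : ∀ p, IsClopenProto R₂ p → IsClopenProto R₁ (pmap (⇑α) (⇑β) p) := by
    rintro p ⟨hp, h1, h2⟩
    exact ⟨proto_pre R₁ R₂ α.toEquiv β.toEquiv hrel p hp, (clo p h1 h2).1, (clo p h1 h2).2⟩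
  have mapsP' : ∀ p, IsClopenProto R₁ p → IsClopenProto R₂ (pmap (⇑α.symm) (⇑β.symm) p) := by
    rintro p ⟨hp, h1, h2⟩
    exact ⟨proto_pre R₂ R₁ α.symm.toEquiv β.symm.toEquiv hrel' p hp,
      (clo' p h1 h2).1, (clo' p h1 h2).2⟩
  have mapsS : ∀ p, IsClopenSemi R₂ p → IsClopenSemi R₁ (pmap (⇑α) (⇑β) p) := by
    rintro p ⟨hp, h1, h2⟩
    exact ⟨semi_pre R₁ R₂ α.toEquiv β.toEquiv hrel p hp, (clo p h1 h2).1, (clo p h1 h2).2⟩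
  have mapsS' : ∀ p, IsClopenSemi R₁ p → IsClopenSemi R₂ (pmap (⇑α.symm) (⇑β.symm) p) := by
    rintro p ⟨hp, h1, h2⟩
    exact ⟨semi_pre R₂ R₁ α.symm.toEquiv β.symm.toEquiv hrel' p hp,
      (clo' p h1 h2).1, (clo' p h1 h2).2⟩
  have hinj := pmap_inj α.toEquiv β.toEquiv
  have hbox : ∀ A : Set X₂, obbox R₁ (⇑α ⁻¹' A) = ⇑β ⁻¹' obbox R₂ A :=
    obbox_pre R₁ R₂ α.toEquiv β.toEquiv hrel
  have hdia : ∀ B : Set Y₂, odia R₁ (⇑β ⁻¹' B) = ⇑α ⁻¹' odia R₂ B :=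
    odia_pre R₁ R₂ α.toEquiv β.toEquiv hrel
  refine ⟨mapsP, ⟨fun p hp => mapsP p hp, hinj.injOn, ?_⟩, ?_, ?_, ?_, ?_,
    ⟨fun p hp => mapsS p hp, hinj.injOn, ?_⟩⟩
  · intro q hq
    exact ⟨pmap (⇑α.symm) (⇑β.symm) q, mapsP' q hq, pmap_comp α.toEquiv β.toEquiv q⟩
  · intro p q _ _
    constructor
    · unfold pinf pmap
      rw [← Set.preimage_union, hbox]
    · unfold psup pmap
      rw [← Set.preimage_inter, hdia]
  · intro p _
    constructor
    · unfold pneg pmap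
      simp [← Set.preimage_compl, hbox p.1ᶜ]
    · unfold pdneg pmap
      simp [← Set.preimage_compl, hdia p.2ᶜ]
  · unfold ptop pmap; simp
  · unfold pbot pmap; simp
  · intro q hq
    exact ⟨pmap (⇑α.symm) (⇑β.symm) q, mapsS' q hq, pmap_comp α.toEquiv β.toEquiv q⟩
end

section
/- Let D be a double Boolean algebra and consider the context K_pr(D) = (F_pr(D), I_pr(D), ∇), where F ∇ I iff F ∩ I = ∅. Then for every x ∈ D: (i)(a) (F_x)^■ = I_{¬x} and (i)(b) (F_x)^◆ = I_{⌟(x⊓x)}; (ii)(a) (I_x)^□ = F_{⌟x} and (ii)(b) (I_x)^◇ = F_{¬(x⊔x)}. -/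
universe u v

namespace DBA

variable {D : Type u} (B : DBA D)

lemma inf_assoc' (x y z : D) : B.inf (B.inf x y) z = B.inf x (B.inf y z) := (B.ax3a x y z).symm

lemma inf_left_comm (x y z : D) : B.inf x (B.inf y z) = B.inf y (B.inf x z) := by
  rw [B.ax3a, B.ax2a x y, ← B.ax3a]

lemma inf4 (a b c d : D) : B.inf (B.inf a b) (B.inf c d) = B.inf (B.inf a c) (B.inf b d) := by
  simp only [inf_assoc']
  rw [inf_left_comm B b c d]

lemma inf_inf_self (x y : D) : B.inf (B.inf x y) x = B.inf x y := by
  rw [B.ax2a (B.inf x y) x, B.ax3a, B.ax1a]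

lemma inf_invol (x y : D) : B.inf (B.inf x y) (B.inf x y) = B.inf x y := by
  rw [B.ax3a (B.inf x y) x y, inf_inf_self, inf_assoc', B.ax2a x (B.inf y y), B.ax1a,
    B.ax2a y x]

lemma inf_idem_right (a z : D) : B.inf a (B.inf z z) = B.inf a z := by
  rw [B.ax2a a (B.inf z z), B.ax1a, B.ax2a]

/-- The dual double Boolean algebra. -/
def dual : DBA D where
  sup := B.inf
  inf := B.sup
  neg := B.dneg
  dneg := B.neg
  top := B.bot
  bot := B.top
  ax1a := B.ax1b
  ax2a := B.ax2b
  ax3a := B.ax3b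
  ax4a := B.ax4b
  ax5a := B.ax5b
  ax6a := B.ax6b
  ax7a := B.ax7b
  ax8a := B.ax8b
  ax9a := B.ax9b
  ax10a := B.ax10b
  ax11a := B.ax11b
  ax1b := B.ax1a
  ax2b := B.ax2a
  ax3b := B.ax3a
  ax4b := B.ax4a
  ax5b := B.ax5a
  ax6b := B.ax6a
  ax7b := B.ax7a
  ax8b := B.ax8a
  ax9b := B.ax9a
  ax10b := B.ax10a
  ax11b := B.ax11a
  ax12 := fun x => (B.ax12 x).symm

lemma sup_invol (x y : D) : B.sup (B.sup x y) (B.sup x y) = B.sup x y :=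
  inf_invol B.dual x y

lemma neg_neg' (x : D) : B.neg (B.neg x) = B.inf x x := by
  rw [← B.ax4a x, B.ax8a]

lemma neg_idem_s11 (x : D) : B.inf (B.neg x) (B.neg x) = B.neg x := by
  have h1 : B.neg (B.inf (B.neg x) (B.neg x)) = B.inf x x := by
    rw [B.ax4a (B.neg x), neg_neg']
  calc B.inf (B.neg x) (B.neg x)
      = B.neg (B.neg (B.inf (B.neg x) (B.neg x))) := (B.ax8a _ _).symm
    _ = B.neg (B.inf x x) := by rw [h1]
    _ = B.neg x := B.ax4a x

lemma inf_bot_s11 (z : D) : B.inf z B.bot = B.bot := by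
  rw [← B.ax9a z, B.ax3a, B.ax1a]

lemma sup_top_s11 (z : D) : B.sup z B.top = B.top := inf_bot_s11 B.dual z

lemma inf_top (z : D) : B.inf z B.top = B.inf z z := by
  rw [← B.ax9b z, B.ax5a]

lemma sup_bot (z : D) : B.sup z B.bot = B.sup z z := inf_top B.dual z

lemma bot_le_s11 (z : D) : B.le B.bot z := by
  constructor
  · rw [B.ax2a, inf_bot_s11, B.ax2a, inf_bot_s11]
  · rw [B.ax2b, sup_bot]

lemma le_top_s11 (z : D) : B.le z B.top := by
  constructor
  · rw [inf_top]
  · rw [sup_top_s11, sup_top_s11]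

lemma le_refl'_s11 (z : D) : B.le z z := ⟨rfl, rfl⟩

lemma le_trans' {x y z : D} (h1 : B.le x y) (h2 : B.le y z) : B.le x z := by
  obtain ⟨a1, a2⟩ := h1
  obtain ⟨b1, b2⟩ := h2
  constructor
  · rw [← B.ax1a x z, ← a1, inf_assoc', b1, B.ax3a, a1, B.ax1a]
    exact a1
  · have c1 : B.sup z y = B.sup z z := by rw [B.ax2b]; exact b2
    have c2 : B.sup y x = B.sup y y := by rw [B.ax2b]; exact a2
    rw [B.ax2b x z, ← B.ax1b z x, ← c1, ← B.ax3b, c2, B.ax3b, c1, B.ax1b]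
    exact c1

lemma inf_le_left' (x y : D) : B.le (B.inf x y) x := by
  constructor
  · rw [B.ax2a (B.inf x y) x, B.ax3a, B.ax1a, inf_invol]
  · rw [B.ax2b, B.ax5b]

lemma inf_le_right' (x y : D) : B.le (B.inf x y) y := by
  rw [B.ax2a]; exact inf_le_left' B y x

lemma inf_inf_le {x y : D} (h : B.inf x y = B.inf x x) (z : D) :
    B.le (B.inf x z) (B.inf y z) := by
  constructor
  · rw [inf4, h, ← inf4]
  · have key : B.inf x z = B.inf (B.inf y z) x := by
      rw [B.ax2a (B.inf y z) x, B.ax3a, h, B.ax1a]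
    rw [B.ax2b, key, B.ax5b]

lemma inf_le_inf {u v w w' : D} (h1 : B.le u w) (h2 : B.le v w') :
    B.le (B.inf u v) (B.inf w w') := by
  have s1 : B.le (B.inf u v) (B.inf w v) := inf_inf_le B h1.1 v
  have s2 : B.le (B.inf v w) (B.inf w' w) := inf_inf_le B h2.1 w
  rw [B.ax2a v w, B.ax2a w' w] at s2
  exact le_trans' B s1 s2

lemma le_inf {a z w : D} (ha : B.inf a a = a) (h1 : B.le a z) (h2 : B.le a w) :
    B.le a (B.inf z w) := by
  have h3 : B.inf a w = a := by rw [h2.1, ha]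
  have := inf_inf_le B h1.1 w
  rwa [h3] at this

lemma vee_le_sup {a b : D} (ha : B.inf a a = a) (hb : B.inf b b = b) :
    B.le (B.vee a b) (B.sup a b) := by
  have hA : B.inf (B.sup a b) a = a := by
    rw [B.ax2a, B.ax5a, ha]
  have hB : B.inf (B.sup a b) b = b := by
    rw [B.ax2a, B.ax2b, B.ax5a, hb]
  have key : B.inf (B.sup a b) (B.vee a b) = B.vee a b := by
    unfold vee
    rw [B.ax6a, hA, hB]
  constructor
  · rw [B.ax2a (B.vee a b) (B.sup a b), key]
    unfold vee
    rw [neg_idem_s11]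
  · rw [B.ax2b (B.vee a b) (B.sup a b), ← key, B.ax5b]

lemma vee_compl (h z : D) : B.vee (B.inf h z) (B.inf h (B.neg z)) = B.inf h h := by
  unfold vee
  rw [← B.ax6a h z (B.neg z), neg_neg' B z, B.ax3a (B.neg z) z z, B.ax2a (B.neg z) z,
    B.ax9a, B.ax2a B.bot z, inf_bot_s11, B.ax10a, B.ax3a, inf_top B h, B.ax1a h B.top,
    inf_top B h]

lemma filter_bot_s11 {F : Set D} (hF : B.IsFilter F) (h : B.bot ∈ F) : F = Set.univ := by
  ext z; simp only [Set.mem_univ, iff_true]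
  exact hF.2 _ h z (bot_le_s11 B z)

lemma ideal_top_s11 {I : Set D} (hI : B.IsIdeal I) (h : B.top ∈ I) : I = Set.univ := by
  ext z; simp only [Set.mem_univ, iff_true]
  exact hI.2 _ h z (le_top_s11 B z)

def upSet (a : D) : Set D := {z | B.le a z}

lemma isFilter_upSet {a : D} (ha : B.inf a a = a) : B.IsFilter (B.upSet a) := by
  constructor
  · intro z hz w hw
    exact le_inf B ha hz hw
  · intro z hz w hw
    exact le_trans' B hz hw

/-- Primary filter extension lemma. -/
lemma exists_primaryFilter {I F₀ : Set D} (hI : B.IsIdeal I) (hF₀ : B.IsFilter F₀)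
    (hne : F₀.Nonempty) (hIne : I.Nonempty) (hdisj : F₀ ∩ I = ∅) :
    ∃ F, B.IsPrimaryFilter F ∧ F₀ ⊆ F ∧ F ∩ I = ∅ := by
  classical
  set S : Set (Set D) := {F | B.IsFilter F ∧ F₀ ⊆ F ∧ F ∩ I = ∅} with hS
  have hzorn : ∀ c ⊆ S, IsChain (· ⊆ ·) c → c.Nonempty → ∃ ub ∈ S, ∀ s ∈ c, s ⊆ ub := by
    rintro c hcS hchain ⟨F₁, hF₁⟩
    refine ⟨⋃₀ c, ⟨⟨?_, ?_⟩, ?_, ?_⟩, fun s hs => Set.subset_sUnion_of_mem hs⟩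
    · rintro x ⟨Fa, hFa, hxa⟩ y ⟨Fb, hFb, hyb⟩
      rcases hchain.total hFa hFb with h | h
      · exact ⟨Fb, hFb, (hcS hFb).1.1 x (h hxa) y hyb⟩
      · exact ⟨Fa, hFa, (hcS hFa).1.1 x hxa y (h hyb)⟩
    · rintro x ⟨Fa, hFa, hxa⟩ z hz
      exact ⟨Fa, hFa, (hcS hFa).1.2 x hxa z hz⟩
    · exact (hcS hF₁).2.1.trans (Set.subset_sUnion_of_mem hF₁)
    · rw [Set.eq_empty_iff_forall_notMem]
      rintro x ⟨⟨Fa, hFa, hxa⟩, hxI⟩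
      have := (hcS hFa).2.2
      rw [Set.eq_empty_iff_forall_notMem] at this
      exact this x ⟨hxa, hxI⟩
  obtain ⟨F, hF₀F, hFmax⟩ := zorn_subset_nonempty S hzorn F₀ ⟨hF₀, subset_rfl, hdisj⟩
  obtain ⟨hFfil, hF₀F', hFdisj⟩ := hFmax.prop
  have hFne : F.Nonempty := hne.mono hF₀F
  have key : ∀ z, z ∉ F → ∃ f ∈ F, B.inf f z ∈ I := by
    intro z hz
    set Fz : Set D := {w | ∃ f ∈ F, B.le (B.inf f z) w} with hFzdef
    have hFzfil : B.IsFilter Fz := by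
      constructor
      · rintro u ⟨f, hf, hfu⟩ v ⟨g, hg, hgv⟩
        refine ⟨B.inf f g, hFfil.1 f hf g hg, ?_⟩
        have e1 : B.inf (B.inf f g) z = B.inf (B.inf f z) (B.inf g z) := by
          rw [inf4, inf_idem_right]
        rw [e1]
        exact inf_le_inf B hfu hgv
      · rintro u ⟨f, hf, hfu⟩ w hw
        exact ⟨f, hf, le_trans' B hfu hw⟩
    have hFsub : F ⊆ Fz := fun f hf => ⟨f, hf, inf_le_left' B f z⟩
    have hzFz : z ∈ Fz := by
      obtain ⟨f₁, hf₁⟩ := hFne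
      exact ⟨f₁, hf₁, inf_le_right' B f₁ z⟩
    have hFzI : Fz ∩ I ≠ ∅ := by
      intro hempty
      have hFzS : Fz ∈ S := ⟨hFzfil, hF₀F'.trans hFsub, hempty⟩
      exact hz (hFsub.antisymm (hFmax.2 hFzS hFsub) ▸ hzFz)
    obtain ⟨w, ⟨⟨f, hf, hle⟩, hwI⟩⟩ := Set.nonempty_iff_ne_empty.mpr hFzI
    exact ⟨f, hf, hI.2 w hwI _ hle⟩
  have hdisj' : ∀ w, w ∈ F → w ∈ I → False := by
    intro w h1 h2
    rw [Set.eq_empty_iff_forall_notMem] at hFdisj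
    exact hFdisj w ⟨h1, h2⟩
  have hprim : ∀ z, z ∈ F ∨ B.neg z ∈ F := by
    intro z
    by_contra hcon
    push_neg at hcon
    obtain ⟨hz, hnz⟩ := hcon
    obtain ⟨f, hf, hfI⟩ := key z hz
    obtain ⟨g, hg, hgI⟩ := key (B.neg z) hnz
    set h := B.inf f g with hh
    have hhF : h ∈ F := hFfil.1 f hf g hg
    have haI : B.inf h z ∈ I := by
      have e : B.inf h z = B.inf (B.inf f z) g := by
        rw [hh, inf_assoc', B.ax2a g z, ← inf_assoc']
      rw [e]
      exact hI.2 _ hfI _ (inf_le_left' B (B.inf f z) g)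
    have hbI : B.inf h (B.neg z) ∈ I := by
      have e : B.inf h (B.neg z) = B.inf (B.inf g (B.neg z)) f := by
        rw [hh, B.ax2a f g, inf_assoc', B.ax2a f (B.neg z), ← inf_assoc']
      rw [e]
      exact hI.2 _ hgI _ (inf_le_left' B (B.inf g (B.neg z)) f)
    have hsI : B.sup (B.inf h z) (B.inf h (B.neg z)) ∈ I := hI.1 _ haI _ hbI
    have hvI : B.vee (B.inf h z) (B.inf h (B.neg z)) ∈ I :=
      hI.2 _ hsI _ (vee_le_sup B (inf_invol B h z) (inf_invol B h (B.neg z)))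
    rw [vee_compl] at hvI
    exact hdisj' _ (hFfil.1 h hhF h hhF) hvI
  refine ⟨F, ⟨hFfil, ?_, hprim⟩, hF₀F, hFdisj⟩
  intro huniv
  obtain ⟨i, hi⟩ := hIne
  exact hdisj' i (huniv ▸ Set.mem_univ i) hi

/-- (i)(a) core. -/
lemma lemA (I : Set D) (hI : B.IsPrimaryIdeal I) (x : D) :
    B.neg x ∈ I ↔ ∀ F, B.IsPrimaryFilter F → F ∩ I = ∅ → x ∈ F := by
  constructor
  · intro h F hF hd
    rcases hF.2.2 x with hx | hx
    · exact hx
    · exact absurd (Set.eq_empty_iff_forall_notMem.mp hd (B.neg x) ⟨hx, h⟩) (fun c => c)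
  · intro H
    by_contra hn
    have hIne : I.Nonempty := by
      rcases hI.2.2 x with h | h
      exacts [⟨x, h⟩, ⟨B.dneg x, h⟩]
    have hdisj : B.upSet (B.neg x) ∩ I = ∅ := by
      rw [Set.eq_empty_iff_forall_notMem]
      rintro z ⟨hz, hzI⟩
      exact hn (hI.1.2 z hzI _ hz)
    obtain ⟨F, hF, hsub, hd⟩ := exists_primaryFilter B hI.1 (isFilter_upSet B (neg_idem_s11 B x))
      ⟨B.neg x, le_refl'_s11 B _⟩ hIne hdisj
    have hx : x ∈ F := H F hF hd
    have hnx : B.neg x ∈ F := hsub (le_refl'_s11 B _)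
    have hbot : B.bot ∈ F := by
      have := hF.1.1 x hx (B.neg x) hnx
      rwa [B.ax9a] at this
    exact hF.2.1 (filter_bot_s11 B hF.1 hbot)

/-- (i)(b) core. -/
lemma lemB (I : Set D) (hI : B.IsPrimaryIdeal I) (x : D) :
    B.dneg (B.inf x x) ∈ I ↔ ∃ F, B.IsPrimaryFilter F ∧ F ∩ I = ∅ ∧ x ∈ F := by
  constructor
  · intro h
    have hIne : I.Nonempty := ⟨_, h⟩
    have hIprop : I ≠ Set.univ := hI.2.1
    have hdisj : B.upSet (B.inf x x) ∩ I = ∅ := by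
      rw [Set.eq_empty_iff_forall_notMem]
      rintro z ⟨hz, hzI⟩
      have hxxI : B.inf x x ∈ I := hI.1.2 z hzI _ hz
      have htop : B.top ∈ I := by
        have := hI.1.1 _ hxxI _ h
        rwa [B.ax9b] at this
      exact hIprop (ideal_top_s11 B hI.1 htop)
    obtain ⟨F, hF, hsub, hd⟩ := exists_primaryFilter B hI.1
      (isFilter_upSet B (inf_invol B x x)) ⟨B.inf x x, le_refl'_s11 B _⟩ hIne hdisj
    exact ⟨F, hF, hd, hsub (inf_le_left' B x x)⟩
  · rintro ⟨F, hF, hd, hx⟩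
    rcases hI.2.2 (B.inf x x) with h | h
    · exfalso
      have : B.inf x x ∈ F := hF.1.1 x hx x hx
      exact Set.eq_empty_iff_forall_notMem.mp hd (B.inf x x) ⟨this, h⟩
    · exact h

lemma dual_le {x y : D} : B.dual.le x y ↔ B.le y x := by
  constructor
  · rintro ⟨h1, h2⟩
    constructor
    · show B.inf y x = B.inf y y
      rw [B.ax2a y x]; exact h2
    · show B.sup y x = B.sup x x
      rw [B.ax2b y x]; exact h1
  · rintro ⟨h1, h2⟩
    constructor
    · show B.sup x y = B.sup x x
      rw [B.ax2b x y]; exact h2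
    · show B.inf x y = B.inf y y
      rw [B.ax2a x y]; exact h1

lemma dual_isFilter {S : Set D} : B.dual.IsFilter S ↔ B.IsIdeal S := by
  constructor
  · rintro ⟨h1, h2⟩
    exact ⟨h1, fun x hx z hz => h2 x hx z ((dual_le B).mpr hz)⟩
  · rintro ⟨h1, h2⟩
    exact ⟨h1, fun x hx z hz => h2 x hx z ((dual_le B).mp hz)⟩

lemma dual_isIdeal {S : Set D} : B.dual.IsIdeal S ↔ B.IsFilter S := by
  constructor
  · rintro ⟨h1, h2⟩
    exact ⟨h1, fun x hx z hz => h2 x hx z ((dual_le B).mpr hz)⟩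
  · rintro ⟨h1, h2⟩
    exact ⟨h1, fun x hx z hz => h2 x hx z ((dual_le B).mp hz)⟩

lemma dual_isPrimaryFilter {S : Set D} : B.dual.IsPrimaryFilter S ↔ B.IsPrimaryIdeal S := by
  constructor
  · rintro ⟨h1, h2, h3⟩
    exact ⟨(dual_isFilter B).mp h1, h2, h3⟩
  · rintro ⟨h1, h2, h3⟩
    exact ⟨(dual_isFilter B).mpr h1, h2, h3⟩

lemma dual_isPrimaryIdeal {S : Set D} : B.dual.IsPrimaryIdeal S ↔ B.IsPrimaryFilter S := by
  constructor
  · rintro ⟨h1, h2, h3⟩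
    exact ⟨(dual_isIdeal B).mp h1, h2, h3⟩
  · rintro ⟨h1, h2, h3⟩
    exact ⟨(dual_isIdeal B).mpr h1, h2, h3⟩

end DBA


/-- In the context (F_pr(D), I_pr(D), ∇):
(F_x)^■ = I_{¬x}, (F_x)^◆ = I_{⌟(x⊓x)}, (I_x)^□ = F_{⌟x}, (I_x)^◇ = F_{¬(x⊔x)}. -/
theorem stmt11 {D : Type u} (A : DBA D) (x : D) :
    obbox (nabla A) (Fset A x) = Iset A (A.neg x) ∧
    obdia (nabla A) (Fset A x) = Iset A (A.dneg (A.inf x x)) ∧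
    obox (nabla A) (Iset A x) = Fset A (A.dneg x) ∧
    odia (nabla A) (Iset A x) = Fset A (A.neg (A.sup x x)) := by
  refine ⟨?_, ?_, ?_, ?_⟩
  · ext I
    simp only [obbox, Set.mem_setOf_eq, Fset, Iset, nabla]
    constructor
    · intro h
      exact (DBA.lemA A I.val I.prop x).mpr (fun F hF hd => h ⟨F, hF⟩ hd)
    · intro h F hF
      exact (DBA.lemA A I.val I.prop x).mp h F.val F.prop hF
  · ext I
    simp only [obdia, Set.mem_setOf_eq, Fset, Iset, nabla]
    constructor
    · rintro ⟨F, hxF, hd⟩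
      exact (DBA.lemB A I.val I.prop x).mpr ⟨F.val, F.prop, hd, hxF⟩
    · intro h
      obtain ⟨F, hF, hd, hx⟩ := (DBA.lemB A I.val I.prop x).mp h
      exact ⟨⟨F, hF⟩, hx, hd⟩
  · ext F
    simp only [obox, Set.mem_setOf_eq, Fset, Iset, nabla]
    have hF' : (DBA.dual A).IsPrimaryIdeal F.val := (DBA.dual_isPrimaryIdeal A).mpr F.prop
    constructor
    · intro h
      exact (DBA.lemA (DBA.dual A) F.val hF' x).mpr
        (fun G hG hd => h ⟨G, (DBA.dual_isPrimaryFilter A).mp hG⟩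
          (by rw [Set.inter_comm]; exact hd))
    · intro h I hd
      exact (DBA.lemA (DBA.dual A) F.val hF' x).mp h I.val
        ((DBA.dual_isPrimaryFilter A).mpr I.prop) (by rw [Set.inter_comm]; exact hd)
  · ext F
    simp only [odia, Set.mem_setOf_eq, Fset, Iset, nabla]
    have hF' : (DBA.dual A).IsPrimaryIdeal F.val := (DBA.dual_isPrimaryIdeal A).mpr F.prop
    constructor
    · rintro ⟨I, hxI, hd⟩
      exact (DBA.lemB (DBA.dual A) F.val hF' x).mpr
        ⟨I.val, (DBA.dual_isPrimaryFilter A).mpr I.prop,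
          (by rw [Set.inter_comm]; exact hd), hxI⟩
    · intro h
      obtain ⟨G, hG, hd, hx⟩ := (DBA.lemB (DBA.dual A) F.val hF' x).mp h
      exact ⟨⟨G, (DBA.dual_isPrimaryFilter A).mp hG⟩, hx, by rw [Set.inter_comm]; exact hd⟩
end
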